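/- arXiv:2605.10138 — 6 statements merged into one kernel-verified Lean document; each statement's English description precedes it below -/
import Mathlib

section
/- Let m_i, m_j > 0. There exists a constant C > 0 such that for every v ∈ ℝ³, ∫_{ℝ³} |m_i v − m_j u|^{−5/2} (1 + |u|)^{−1} du ≤ C (1 + |v|)^{−1/2}. -/
open MeasureTheory Real Set Metric
open scoped ENNReal NNReal

noncomputable section

local notation "E3" => EuclideanSpace ℝ (Fin 3)

lemma polar3 (f : ℝ → ℝ≥0∞) (hf : Measurable f) :
    ∫⁻ x : E3, f ‖x‖ =
      3 * volume (ball (0 : E3) 1) * ∫⁻ y in Ioi (0:ℝ), ENNReal.ofReal (y ^ 2) * f y := by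
  have hdim : Module.finrank ℝ E3 = 3 := by simp [finrank_euclideanSpace]
  have hg : Measurable (fun y : Ioi (0:ℝ) => f y.1) := hf.comp measurable_subtype_coe
  calc ∫⁻ x : E3, f ‖x‖
      = ∫⁻ x : E3, f ‖x‖ ∂(volume.restrict ({0}ᶜ)) := by
        rw [restrict_compl_singleton]
    _ = ∫⁻ x : (({0}ᶜ : Set E3)), f ‖x.1‖
          ∂(volume.comap (Subtype.val : ({0}ᶜ : Set E3) → E3)) :=
        (lintegral_subtype_comap (measurableSet_singleton (0:E3)).compl
          (fun x => f ‖x‖)).symm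
    _ = ∫⁻ p : sphere (0:E3) 1 × Ioi (0:ℝ), (f ∘ Subtype.val ∘ Prod.snd) p
          ∂((volume : Measure E3).toSphere.prod (.volumeIoiPow (Module.finrank ℝ E3 - 1))) :=
        by
          rw [← (volume : Measure E3).measurePreserving_homeomorphUnitSphereProd.lintegral_comp_emb
            (Homeomorph.measurableEmbedding _) (f ∘ Subtype.val ∘ Prod.snd)]
          congr 1; funext x; simp [homeomorphUnitSphereProd_apply_snd_coe]
    _ = (volume : Measure E3).toSphere univ *
          ∫⁻ y : Ioi (0:ℝ), f y.1 ∂(Measure.volumeIoiPow (Module.finrank ℝ E3 - 1)) := by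
        simp only [Function.comp_apply]
        rw [MeasureTheory.lintegral_prod _ ((by fun_prop :
          Measurable (fun p : sphere (0:E3) 1 × Ioi (0:ℝ) => f p.2.1))).aemeasurable]
        simp [lintegral_const, mul_comm]
    _ = 3 * volume (ball (0 : E3) 1) * ∫⁻ y in Ioi (0:ℝ), ENNReal.ofReal (y ^ 2) * f y := by
        rw [Measure.toSphere_apply_univ, hdim]
        have h2 : ∫⁻ y : Ioi (0:ℝ), f y.1 ∂(Measure.volumeIoiPow 2)
            = ∫⁻ y in Ioi (0:ℝ), ENNReal.ofReal (y ^ 2) * f y := by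
          rw [Measure.volumeIoiPow, lintegral_withDensity_eq_lintegral_mul _
            (by fun_prop : Measurable (fun r : Ioi (0:ℝ) => ENNReal.ofReal (r.1 ^ 2))) hg]
          rw [← lintegral_subtype_comap measurableSet_Ioi
            (fun y => ENNReal.ofReal (y ^ 2) * f y)]
          rfl
        rw [show (3 - 1 : ℕ) = 2 from rfl, h2]
        norm_num

lemma lintA {p b : ℝ} (hp : -1 < p) (hb : 0 < b) :
    ∫⁻ y in Ioc (0:ℝ) b, ENNReal.ofReal (y ^ p) = ENNReal.ofReal (b ^ (p+1) / (p+1)) := by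
  have hint : IntegrableOn (fun y : ℝ => y ^ p) (Ioc 0 b) := by
    rw [← intervalIntegrable_iff_integrableOn_Ioc_of_le hb.le]
    exact intervalIntegral.intervalIntegrable_rpow' hp
  rw [← ofReal_integral_eq_lintegral_ofReal hint ?nn]
  case nn =>
    filter_upwards [ae_restrict_mem measurableSet_Ioc] with y hy
    exact rpow_nonneg hy.1.le _
  congr 1
  rw [← intervalIntegral.integral_of_le hb.le,
    integral_rpow (Or.inl hp), zero_rpow (by linarith), sub_zero]

lemma lintB {p b : ℝ} (hp : p < -1) (hb : 0 < b) :
    ∫⁻ y in Ioi b, ENNReal.ofReal (y ^ p) = ENNReal.ofReal (-b ^ (p+1) / (p+1)) := by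
  have hint : IntegrableOn (fun y : ℝ => y ^ p) (Ioi b) :=
    integrableOn_Ioi_rpow_of_lt hp hb
  rw [← ofReal_integral_eq_lintegral_ofReal hint ?nn]
  case nn =>
    filter_upwards [ae_restrict_mem measurableSet_Ioi] with y hy
    exact rpow_nonneg (hb.trans hy).le _
  rw [integral_Ioi_rpow_of_lt hp hb, neg_div]

lemma meas_aux (p : ℝ) : Measurable (fun t : ℝ => ENNReal.ofReal (t ^ p)) := by fun_prop

lemma lint_ball (p b : ℝ) (hp : -3 < p) (hb : 0 < b) :
    ∫⁻ u : E3, (Iic b).indicator (fun t => ENNReal.ofReal (t ^ p)) ‖u‖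
      = 3 * volume (ball (0:E3) 1) * ENNReal.ofReal (b ^ (p+3) / (p+3)) := by
  rw [polar3 _ ((meas_aux p).indicator measurableSet_Iic)]
  congr 1
  calc ∫⁻ y in Ioi (0:ℝ), ENNReal.ofReal (y^2) * (Iic b).indicator (fun t => ENNReal.ofReal (t ^ p)) y
      = ∫⁻ y in Ioi (0:ℝ), (Iic b).indicator (fun y => ENNReal.ofReal (y^2) * ENNReal.ofReal (y^p)) y := by
        apply lintegral_congr; intro y
        by_cases h : y ∈ Iic b <;> simp [h]
    _ = ∫⁻ y in Ioc (0:ℝ) b, ENNReal.ofReal (y^2) * ENNReal.ofReal (y^p) := by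
        rw [lintegral_indicator measurableSet_Iic,
          Measure.restrict_restrict measurableSet_Iic, Set.inter_comm, Set.Ioi_inter_Iic]
    _ = ∫⁻ y in Ioc (0:ℝ) b, ENNReal.ofReal (y ^ (p+2)) := by
        apply setLIntegral_congr_fun measurableSet_Ioc
        intro y hy
        dsimp only
        rw [← ENNReal.ofReal_mul (sq_nonneg y),
          show (y:ℝ)^2 * y^p = y^(p+2) by
            rw [← Real.rpow_natCast y 2, ← Real.rpow_add hy.1, add_comm]; norm_num]
    _ = ENNReal.ofReal (b ^ (p+3) / (p+3)) := by
        rw [lintA (by linarith) hb]; ring_nf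

lemma lint_tail (p b : ℝ) (hp : p < -3) (hb : 0 < b) :
    ∫⁻ u : E3, (Ioi b).indicator (fun t => ENNReal.ofReal (t ^ p)) ‖u‖
      = 3 * volume (ball (0:E3) 1) * ENNReal.ofReal (-b ^ (p+3) / (p+3)) := by
  rw [polar3 _ ((meas_aux p).indicator measurableSet_Ioi)]
  congr 1
  calc ∫⁻ y in Ioi (0:ℝ), ENNReal.ofReal (y^2) * (Ioi b).indicator (fun t => ENNReal.ofReal (t ^ p)) y
      = ∫⁻ y in Ioi (0:ℝ), (Ioi b).indicator (fun y => ENNReal.ofReal (y^2) * ENNReal.ofReal (y^p)) y := by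
        apply lintegral_congr; intro y
        by_cases h : y ∈ Ioi b <;> simp [h]
    _ = ∫⁻ y in Ioi b, ENNReal.ofReal (y^2) * ENNReal.ofReal (y^p) := by
        rw [lintegral_indicator measurableSet_Ioi,
          Measure.restrict_restrict measurableSet_Ioi, Set.Ioi_inter_Ioi,
          max_eq_left hb.le]
    _ = ∫⁻ y in Ioi b, ENNReal.ofReal (y ^ (p+2)) := by
        apply setLIntegral_congr_fun measurableSet_Ioi
        intro y hy
        dsimp only
        rw [← ENNReal.ofReal_mul (sq_nonneg y),
          show (y:ℝ)^2 * y^p = y^(p+2) by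
            rw [← Real.rpow_natCast y 2, ← Real.rpow_add (hb.trans hy), add_comm]; norm_num]
    _ = ENNReal.ofReal (-b ^ (p+3) / (p+3)) := by
        rw [lintB (by linarith) hb]; ring_nf

set_option maxHeartbeats 2000000 in
lemma key (a : E3) :
    ∫⁻ u : E3, ENNReal.ofReal (‖a - u‖ ^ (-(5:ℝ)/2) * (1 + ‖u‖)⁻¹)
      ≤ ENNReal.ofReal (108 * (volume (ball (0:E3) 1)).toReal *
          (1 + ‖a‖) ^ (-(1:ℝ)/2)) := by
  have h8 : (2:ℝ) ^ ((5:ℝ)/2) ≤ 8 := by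
    calc (2:ℝ)^((5:ℝ)/2) ≤ 2^(3:ℝ) :=
          Real.rpow_le_rpow_of_exponent_le one_le_two (by norm_num)
    _ = 8 := by
          rw [show (3:ℝ) = ((3:ℕ):ℝ) by norm_num, Real.rpow_natCast]; norm_num
  have hhalfpow : ∀ x : ℝ, 0 < x → (x/2) ^ (-(5:ℝ)/2) ≤ 8 * x ^ (-(5:ℝ)/2) := by
    intro x hx
    rw [Real.div_rpow hx.le (by norm_num : (0:ℝ) ≤ 2), neg_div,
      Real.rpow_neg (by norm_num : (0:ℝ) ≤ 2), div_eq_mul_inv, inv_inv]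
    have hxp : 0 ≤ x ^ (-(5:ℝ)/2) := Real.rpow_nonneg hx.le _
    rw [neg_div] at hxp
    calc x ^ (-((5:ℝ)/2)) * (2:ℝ) ^ ((5:ℝ)/2) ≤ x ^ (-((5:ℝ)/2)) * 8 :=
          mul_le_mul_of_nonneg_left h8 hxp
      _ = 8 * x ^ (-((5:ℝ)/2)) := mul_comm _ _
  set R : ℝ := 1 + ‖a‖ with hRdef
  have hR0 : 0 < R := by have := norm_nonneg a; simp only [hRdef]; linarith
  have hR1 : 1 ≤ R := by have := norm_nonneg a; simp only [hRdef]; linarith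
  set κ : ℝ≥0∞ := volume (ball (0:E3) 1) with hκdef
  have hκtop : κ ≠ ⊤ := measure_ball_lt_top.ne
  set κr : ℝ := κ.toReal with hκrdef
  have hκr : 0 ≤ κr := ENNReal.toReal_nonneg
  set c2 : ℝ := 8 * R ^ (-(5:ℝ)/2) with hc2def
  have hc2 : 0 ≤ c2 := by positivity
  set G1 : E3 → ℝ≥0∞ := fun u => ENNReal.ofReal (2/R) *
    (Iic (R/2)).indicator (fun t => ENNReal.ofReal (t ^ (-(5:ℝ)/2))) ‖a - u‖ with hG1def
  set G2 : E3 → ℝ≥0∞ := fun u => ENNReal.ofReal c2 *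
    (Iic (2*R)).indicator (fun t => ENNReal.ofReal (t ^ (-1:ℝ))) ‖u‖ with hG2def
  set G3 : E3 → ℝ≥0∞ := fun u => ENNReal.ofReal 8 *
    (Ioi (2*R)).indicator (fun t => ENNReal.ofReal (t ^ (-(7:ℝ)/2))) ‖u‖ with hG3def
  -- pointwise bound
  have hae : ∀ᵐ u : E3, u ≠ (0:E3) := by
    have h := (Set.countable_singleton (0:E3)).ae_notMem (volume : Measure E3)
    simpa using h
  have hpt : ∀ u : E3, u ≠ 0 →
      ENNReal.ofReal (‖a - u‖ ^ (-(5:ℝ)/2) * (1 + ‖u‖)⁻¹) ≤ G1 u + G2 u + G3 u := by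
    intro u hu
    have ht0 : (0:ℝ) ≤ ‖a - u‖ := norm_nonneg _
    have hs0 : (0:ℝ) < ‖u‖ := norm_pos_iff.mpr hu
    have htri1 : ‖a‖ ≤ ‖a - u‖ + ‖u‖ := by
      simpa [sub_add_cancel] using norm_add_le (a - u) u
    have htri2 : ‖u‖ ≤ ‖a‖ + ‖a - u‖ := by
      have h := norm_add_le a (u - a)
      simpa [norm_sub_rev, add_sub_cancel] using h
    have hsinv : (1 + ‖u‖)⁻¹ ≤ ‖u‖ ^ (-1:ℝ) := by
      rw [Real.rpow_neg_one]
      exact inv_anti₀ hs0 (by linarith)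
    rcases le_or_gt ‖a - u‖ (R/2) with h1 | h1
    · refine le_trans ?_ (le_add_right (le_add_right (le_refl (G1 u))))
      rw [hG1def]
      simp only
      rw [Set.indicator_of_mem (by exact h1 : ‖a - u‖ ∈ Iic (R/2)),
        ← ENNReal.ofReal_mul (by positivity)]
      apply ENNReal.ofReal_le_ofReal
      have h1s : R/2 ≤ 1 + ‖u‖ := by
        have : ‖a‖ = R - 1 := by simp [hRdef]
        linarith
      have hinv : (1 + ‖u‖)⁻¹ ≤ 2/R := by
        rw [show (2:ℝ)/R = (R/2)⁻¹ by rw [inv_div]]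
        exact inv_anti₀ (by linarith) h1s
      calc ‖a - u‖ ^ (-(5:ℝ)/2) * (1 + ‖u‖)⁻¹
          ≤ ‖a - u‖ ^ (-(5:ℝ)/2) * (2/R) :=
            mul_le_mul_of_nonneg_left hinv (Real.rpow_nonneg ht0 _)
        _ = 2/R * ‖a - u‖ ^ (-(5:ℝ)/2) := mul_comm _ _
    · rcases le_or_gt ‖u‖ (2*R) with h2 | h2
      · refine le_trans ?_ (le_add_right (le_add_self (a := G2 u) (b := G1 u)))
        rw [hG2def]
        simp only
        rw [Set.indicator_of_mem (by exact h2 : ‖u‖ ∈ Iic (2*R)),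
          ← ENNReal.ofReal_mul hc2]
        apply ENNReal.ofReal_le_ofReal
        have htb : ‖a - u‖ ^ (-(5:ℝ)/2) ≤ c2 := by
          calc ‖a - u‖ ^ (-(5:ℝ)/2) ≤ (R/2) ^ (-(5:ℝ)/2) :=
                Real.rpow_le_rpow_of_nonpos (by linarith) h1.le (by norm_num)
          _ ≤ c2 := hhalfpow R hR0
        exact mul_le_mul htb hsinv (by positivity) hc2
      · refine le_trans ?_ (le_add_self (a := G3 u) (b := G1 u + G2 u))
        rw [hG3def]
        simp only
        rw [Set.indicator_of_mem (by exact h2 : ‖u‖ ∈ Ioi (2*R)),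
          ← ENNReal.ofReal_mul (by norm_num : (0:ℝ) ≤ 8)]
        apply ENNReal.ofReal_le_ofReal
        have hts : ‖u‖/2 ≤ ‖a - u‖ := by
          have : ‖a‖ = R - 1 := by simp [hRdef]
          linarith
        have htb : ‖a - u‖ ^ (-(5:ℝ)/2) ≤ 8 * ‖u‖ ^ (-(5:ℝ)/2) := by
          calc ‖a - u‖ ^ (-(5:ℝ)/2) ≤ (‖u‖/2) ^ (-(5:ℝ)/2) :=
                Real.rpow_le_rpow_of_nonpos (by linarith) hts (by norm_num)
          _ ≤ 8 * ‖u‖ ^ (-(5:ℝ)/2) := hhalfpow ‖u‖ hs0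
        calc ‖a - u‖ ^ (-(5:ℝ)/2) * (1 + ‖u‖)⁻¹
            ≤ (8 * ‖u‖ ^ (-(5:ℝ)/2)) * ‖u‖ ^ (-1:ℝ) :=
              mul_le_mul htb hsinv (by positivity) (by positivity)
          _ = 8 * ‖u‖ ^ (-(7:ℝ)/2) := by
              rw [mul_assoc, ← Real.rpow_add hs0]; norm_num
  -- integrate
  have hstep : ∫⁻ u : E3, ENNReal.ofReal (‖a - u‖ ^ (-(5:ℝ)/2) * (1 + ‖u‖)⁻¹)
      ≤ (∫⁻ u, G1 u) + (∫⁻ u, G2 u) + (∫⁻ u, G3 u) := by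
    have hmono : ∫⁻ u : E3, ENNReal.ofReal (‖a - u‖ ^ (-(5:ℝ)/2) * (1 + ‖u‖)⁻¹)
        ≤ ∫⁻ u, (G1 u + G2 u + G3 u) := by
      apply lintegral_mono_ae
      filter_upwards [hae] with u hu using hpt u hu
    refine hmono.trans (le_of_eq ?_)
    have hm1 : Measurable G1 := by
      apply Measurable.const_mul
      exact ((meas_aux _).indicator measurableSet_Iic).comp
        (measurable_const.sub measurable_id).norm
    have hm2 : Measurable G2 := by
      apply Measurable.const_mul
      exact ((meas_aux _).indicator measurableSet_Iic).comp measurable_norm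
    rw [lintegral_add_left (f := fun u => G1 u + G2 u) (hm1.add hm2), lintegral_add_left hm1]
  -- compute the three integrals
  have hι1 : ∫⁻ u, G1 u = ENNReal.ofReal (2/R) *
      (3 * κ * ENNReal.ofReal ((R/2) ^ (-(5:ℝ)/2+3) / (-(5:ℝ)/2+3))) := by
    rw [hG1def]
    simp only
    rw [lintegral_const_mul' _ _ ENNReal.ofReal_ne_top]
    congr 1
    have hrev : ∀ u : E3, ‖a - u‖ = ‖u - a‖ := fun u => norm_sub_rev a u
    simp_rw [hrev]
    rw [lintegral_sub_right_eq_self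
      (fun u : E3 => (Iic (R/2)).indicator (fun t => ENNReal.ofReal (t ^ (-(5:ℝ)/2))) ‖u‖) a]
    rw [lint_ball _ _ (by norm_num) (by linarith)]
  have hι2 : ∫⁻ u, G2 u = ENNReal.ofReal c2 *
      (3 * κ * ENNReal.ofReal ((2*R) ^ ((-1:ℝ)+3) / ((-1:ℝ)+3))) := by
    rw [hG2def]
    simp only
    rw [lintegral_const_mul' _ _ ENNReal.ofReal_ne_top,
      lint_ball _ _ (by norm_num) (by linarith)]
  have hι3 : ∫⁻ u, G3 u = ENNReal.ofReal 8 *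
      (3 * κ * ENNReal.ofReal (-(2*R) ^ (-(7:ℝ)/2+3) / (-(7:ℝ)/2+3))) := by
    rw [hG3def]
    simp only
    rw [lintegral_const_mul' _ _ ENNReal.ofReal_ne_top,
      lint_tail _ _ (by norm_num) (by linarith)]
  rw [hι1, hι2, hι3] at hstep
  refine hstep.trans ?_
  -- clean up the explicit values
  have he1 : ((R/2) ^ (-(5:ℝ)/2+3) / (-(5:ℝ)/2+3)) = 2 * (R/2) ^ ((1:ℝ)/2) := by
    rw [show (-(5:ℝ)/2+3) = (1:ℝ)/2 by norm_num]
    rw [div_div_eq_mul_div]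
    ring
  have he2 : ((2*R) ^ ((-1:ℝ)+3) / ((-1:ℝ)+3)) = (2*R) ^ ((2:ℕ):ℝ) / 2 := by
    norm_num
  have he3 : (-(2*R) ^ (-(7:ℝ)/2+3) / (-(7:ℝ)/2+3)) = 2 * (2*R) ^ (-(1:ℝ)/2) := by
    rw [show (-(7:ℝ)/2+3) = -(1/2) by norm_num]
    rw [neg_div]
    ring
  rw [he1, he2, he3]
  set X : ℝ := R ^ (-(1:ℝ)/2) with hXdef
  have hX0 : 0 < X := Real.rpow_pos_of_pos hR0 _
  -- real-number estimates for the three terms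
  have hd1 : 2/R * (2 * (R/2) ^ ((1:ℝ)/2)) ≤ 4 * X := by
    have hle : (R/2) ^ ((1:ℝ)/2) ≤ R ^ ((1:ℝ)/2) :=
      Real.rpow_le_rpow (by linarith) (by linarith) (by norm_num)
    have hXe : R⁻¹ * R ^ ((1:ℝ)/2) = X := by
      rw [← Real.rpow_neg_one, ← Real.rpow_add hR0]; congr 1; norm_num
    calc 2/R * (2 * (R/2) ^ ((1:ℝ)/2)) = 4 * (R⁻¹ * (R/2) ^ ((1:ℝ)/2)) := by ring
      _ ≤ 4 * (R⁻¹ * R ^ ((1:ℝ)/2)) := by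
          have hRinv : (0:ℝ) ≤ R⁻¹ := by positivity
          nlinarith
      _ = 4 * X := by rw [hXe]
  have hd2 : c2 * ((2*R) ^ ((2:ℕ):ℝ) / 2) ≤ 16 * X := by
    rw [Real.rpow_natCast]
    have h2R : ((2*R):ℝ) ^ (2:ℕ) = 4 * R^(2:ℕ) := by ring
    rw [h2R, hc2def]
    have hXe : R ^ (-(5:ℝ)/2) * R^(2:ℕ) = X := by
      rw [← Real.rpow_natCast R 2, ← Real.rpow_add hR0]; congr 1; norm_num
    calc 8 * R ^ (-(5:ℝ)/2) * (4 * R^(2:ℕ) / 2) = 16 * (R ^ (-(5:ℝ)/2) * R^(2:ℕ)) := by ring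
      _ = 16 * X := by rw [hXe]
      _ ≤ 16 * X := le_rfl
  have hd3 : (8:ℝ) * (2 * (2*R) ^ (-(1:ℝ)/2)) ≤ 16 * X := by
    have h2R : ((2*R):ℝ) ^ (-(1:ℝ)/2) ≤ X := by
      exact Real.rpow_le_rpow_of_nonpos hR0 (by linarith) (by norm_num)
    nlinarith
  -- assemble
  have h3κ : (3:ℝ≥0∞) * κ = ENNReal.ofReal (3*κr) := by
    rw [ENNReal.ofReal_mul (by norm_num), ENNReal.ofReal_toReal hκtop]
    norm_num
  have hsum : ENNReal.ofReal (2/R) * (3 * κ * ENNReal.ofReal (2 * (R/2) ^ ((1:ℝ)/2)))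
      + ENNReal.ofReal c2 * (3 * κ * ENNReal.ofReal ((2*R) ^ ((2:ℕ):ℝ) / 2))
      + ENNReal.ofReal 8 * (3 * κ * ENNReal.ofReal (2 * (2*R) ^ (-(1:ℝ)/2)))
      = ENNReal.ofReal (3*κr) * (ENNReal.ofReal (2/R * (2 * (R/2) ^ ((1:ℝ)/2)))
        + ENNReal.ofReal (c2 * ((2*R) ^ ((2:ℕ):ℝ) / 2))
        + ENNReal.ofReal ((8:ℝ) * (2 * (2*R) ^ (-(1:ℝ)/2)))) := by
    simp only [h3κ, ENNReal.ofReal_mul (show (0:ℝ) ≤ 2/R by positivity),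
      ENNReal.ofReal_mul hc2, ENNReal.ofReal_mul (show (0:ℝ) ≤ (8:ℝ) by norm_num),
      ENNReal.ofReal_mul (show (0:ℝ) ≤ (3:ℝ) by norm_num)]
    ring
  rw [hsum]
  rw [← ENNReal.ofReal_add (by positivity) (by positivity),
    ← ENNReal.ofReal_add (by positivity) (by positivity),
    ← ENNReal.ofReal_mul (by positivity)]
  apply ENNReal.ofReal_le_ofReal
  have hc2e2 : c2 * ((2*R) ^ ((2:ℕ):ℝ) / 2) ≤ 16 * X := hd2
  have hnn : 0 ≤ 2/R * (2 * (R/2) ^ ((1:ℝ)/2)) := by positivity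
  nlinarith [hd1, hd2, hd3, hκr, hX0.le]

/-- Let `m_i, m_j > 0`. There exists a constant `C > 0` such that for
every `v ∈ ℝ³`, `∫_{ℝ³} |m_i v − m_j u|^{−5/2} (1 + |u|)^{−1} du ≤ C (1 + |v|)^{−1/2}`. -/
theorem statement3 (mi mj : ℝ) (hmi : 0 < mi) (hmj : 0 < mj) :
    ∃ C : ℝ, 0 < C ∧ ∀ v : EuclideanSpace ℝ (Fin 3),
      (∫ u : EuclideanSpace ℝ (Fin 3),
          ‖mi • v - mj • u‖ ^ (-(5 : ℝ) / 2) * (1 + ‖u‖)⁻¹)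
        ≤ C * (1 + ‖v‖) ^ (-(1 : ℝ) / 2) := by
  have hκpos : 0 < (volume (ball (0:E3) 1)).toReal :=
    ENNReal.toReal_pos (measure_ball_pos volume 0 one_pos).ne' measure_ball_lt_top.ne
  set κr : ℝ := (volume (ball (0:E3) 1)).toReal with hκrdef
  have hlam : 0 < mi / mj := div_pos hmi hmj
  set lam : ℝ := mi / mj with hlamdef
  set m : ℝ := min 1 lam with hmdef
  have hm : 0 < m := lt_min one_pos hlam
  refine ⟨mj ^ (-(5:ℝ)/2) * (108 * κr) * m ^ (-(1:ℝ)/2), ?_, ?_⟩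
  · exact mul_pos (mul_pos (Real.rpow_pos_of_pos hmj _)
      (mul_pos (by norm_num) hκpos)) (Real.rpow_pos_of_pos hm _)
  · intro v
    set a : E3 := lam • v with hadef
    have hnorm_a : ‖a‖ = lam * ‖v‖ := by
      rw [hadef, norm_smul, Real.norm_eq_abs, abs_of_pos hlam]
    have hfactor : ∀ u : E3, ‖mi • v - mj • u‖ ^ (-(5:ℝ)/2) * (1 + ‖u‖)⁻¹
        = mj ^ (-(5:ℝ)/2) * (‖a - u‖ ^ (-(5:ℝ)/2) * (1 + ‖u‖)⁻¹) := by
      intro u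
      have h1 : mi • v - mj • u = mj • (a - u) := by
        rw [hadef, smul_sub, smul_smul, hlamdef]
        congr 2
        field_simp
      rw [h1, norm_smul, Real.norm_eq_abs, abs_of_pos hmj,
        Real.mul_rpow hmj.le (norm_nonneg _), mul_assoc]
    have hmeas : AEStronglyMeasurable
        (fun u : E3 => ‖mi • v - mj • u‖ ^ (-(5:ℝ)/2) * (1 + ‖u‖)⁻¹) volume := by
      apply Measurable.aestronglyMeasurable
      fun_prop
    have hnn : 0 ≤ᵐ[volume]
        (fun u : E3 => ‖mi • v - mj • u‖ ^ (-(5:ℝ)/2) * (1 + ‖u‖)⁻¹) :=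
      Filter.Eventually.of_forall fun u => by positivity
    rw [integral_eq_lintegral_of_nonneg_ae hnn hmeas]
    have hb : ∫⁻ u : E3, ENNReal.ofReal (‖mi • v - mj • u‖ ^ (-(5:ℝ)/2) * (1 + ‖u‖)⁻¹)
        ≤ ENNReal.ofReal ((mj ^ (-(5:ℝ)/2) * (108 * κr) * m ^ (-(1:ℝ)/2)) *
            (1 + ‖v‖) ^ (-(1:ℝ)/2)) := by
      calc ∫⁻ u : E3, ENNReal.ofReal (‖mi • v - mj • u‖ ^ (-(5:ℝ)/2) * (1 + ‖u‖)⁻¹)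
          = ∫⁻ u : E3, ENNReal.ofReal (mj ^ (-(5:ℝ)/2) *
              (‖a - u‖ ^ (-(5:ℝ)/2) * (1 + ‖u‖)⁻¹)) :=
            lintegral_congr fun u => by rw [hfactor u]
        _ = ENNReal.ofReal (mj ^ (-(5:ℝ)/2)) *
              ∫⁻ u : E3, ENNReal.ofReal (‖a - u‖ ^ (-(5:ℝ)/2) * (1 + ‖u‖)⁻¹) := by
            simp_rw [ENNReal.ofReal_mul (Real.rpow_nonneg hmj.le _)]
            rw [lintegral_const_mul' _ _ ENNReal.ofReal_ne_top]
        _ ≤ ENNReal.ofReal (mj ^ (-(5:ℝ)/2)) *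
              ENNReal.ofReal (108 * κr * (1 + ‖a‖) ^ (-(1:ℝ)/2)) :=
            mul_le_mul_right (key a) _
        _ ≤ ENNReal.ofReal ((mj ^ (-(5:ℝ)/2) * (108 * κr) * m ^ (-(1:ℝ)/2)) *
              (1 + ‖v‖) ^ (-(1:ℝ)/2)) := by
            rw [← ENNReal.ofReal_mul (Real.rpow_nonneg hmj.le _)]
            apply ENNReal.ofReal_le_ofReal
            have hRa : (1 + ‖a‖) ^ (-(1:ℝ)/2) ≤
                m ^ (-(1:ℝ)/2) * (1 + ‖v‖) ^ (-(1:ℝ)/2) := by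
              have hm1 : m * (1 + ‖v‖) ≤ 1 + ‖a‖ := by
                rw [hnorm_a]
                have h1 := min_le_left (1:ℝ) lam
                have h2 := min_le_right (1:ℝ) lam
                have h3 := norm_nonneg v
                nlinarith
              calc (1 + ‖a‖) ^ (-(1:ℝ)/2) ≤ (m * (1 + ‖v‖)) ^ (-(1:ℝ)/2) :=
                    Real.rpow_le_rpow_of_nonpos (by positivity) hm1 (by norm_num)
                _ = m ^ (-(1:ℝ)/2) * (1 + ‖v‖) ^ (-(1:ℝ)/2) :=
                    Real.mul_rpow hm.le (by positivity)
            calc mj ^ (-(5:ℝ)/2) * (108 * κr * (1 + ‖a‖) ^ (-(1:ℝ)/2))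
                ≤ mj ^ (-(5:ℝ)/2) * (108 * κr *
                    (m ^ (-(1:ℝ)/2) * (1 + ‖v‖) ^ (-(1:ℝ)/2))) := by
                  apply mul_le_mul_of_nonneg_left _ (Real.rpow_nonneg hmj.le _)
                  exact mul_le_mul_of_nonneg_left hRa (by positivity)
              _ = (mj ^ (-(5:ℝ)/2) * (108 * κr) * m ^ (-(1:ℝ)/2)) *
                    (1 + ‖v‖) ^ (-(1:ℝ)/2) := by ring
    refine ENNReal.toReal_le_of_le_ofReal ?_ hb
    have : (0:ℝ) ≤ (1 + ‖v‖) ^ (-(1:ℝ)/2) := Real.rpow_nonneg (by positivity) _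
    have hC : (0:ℝ) ≤ mj ^ (-(5:ℝ)/2) * (108 * κr) * m ^ (-(1:ℝ)/2) := by
      have := Real.rpow_nonneg hmj.le (-(5:ℝ)/2)
      have := Real.rpow_nonneg hm.le (-(1:ℝ)/2)
      positivity
    positivity
end
end

section
/- Let m_i, m_j > 0 with m_i ≠ m_j, and let v, u ∈ ℝ³. Set R := m_j |v − u| / |m_i − m_j| and O := (m_i v − m_j u)/(m_i − m_j). Then −(m_j/4)|u|² + (m_i/4)|v|² − (m_i/4)R² − (m_i/4)|O|² + (m_i/2)·R·|O| = −(m_j / (4(m_i − m_j)²)) · ( |m_i v − m_j u| − m_i |v − u| )². -/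
open Real

noncomputable section

/-- Let `m_i, m_j > 0` with `m_i ≠ m_j`, and let `v, u ∈ ℝ³`. Set
`R := m_j |v − u| / |m_i − m_j|` and `O := (m_i v − m_j u)/(m_i − m_j)`. Then
`−(m_j/4)|u|² + (m_i/4)|v|² − (m_i/4)R² − (m_i/4)|O|² + (m_i/2)·R·|O|
  = −(m_j / (4(m_i − m_j)²)) · (|m_i v − m_j u| − m_i |v − u|)²`. -/
theorem statement4 (mi mj : ℝ) (hmi : 0 < mi) (hmj : 0 < mj) (hne : mi ≠ mj)
    (v u : EuclideanSpace ℝ (Fin 3)) :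
    -(mj / 4) * ‖u‖ ^ 2 + mi / 4 * ‖v‖ ^ 2
        - mi / 4 * (mj * ‖v - u‖ / |mi - mj|) ^ 2
        - mi / 4 * ‖(mi - mj)⁻¹ • (mi • v - mj • u)‖ ^ 2
        + mi / 2 * (mj * ‖v - u‖ / |mi - mj|) * ‖(mi - mj)⁻¹ • (mi • v - mj • u)‖
      = -(mj / (4 * (mi - mj) ^ 2)) * (‖mi • v - mj • u‖ - mi * ‖v - u‖) ^ 2 := by
  have hd : mi - mj ≠ 0 := sub_ne_zero.mpr hne
  have hO : ‖(mi - mj)⁻¹ • (mi • v - mj • u)‖ = ‖mi • v - mj • u‖ / |mi - mj| := by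
    rw [norm_smul, norm_inv, Real.norm_eq_abs, div_eq_inv_mul]
  set a := ‖v - u‖ with ha
  set b := ‖mi • v - mj • u‖ with hb
  have key : b ^ 2 - mi * mj * a ^ 2 = (mi - mj) * (mi * ‖v‖ ^ 2 - mj * ‖u‖ ^ 2) := by
    have h1 : b ^ 2 = mi ^ 2 * ‖v‖ ^ 2 - 2 * (mi * mj * inner ℝ v u) + mj ^ 2 * ‖u‖ ^ 2 := by
      rw [hb, norm_sub_sq_real, norm_smul, norm_smul, real_inner_smul_left,
        real_inner_smul_right, Real.norm_eq_abs, Real.norm_eq_abs,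
        abs_of_pos hmi, abs_of_pos hmj]
      ring
    have h2 : a ^ 2 = ‖v‖ ^ 2 - 2 * inner ℝ v u + ‖u‖ ^ 2 := by
      rw [ha, norm_sub_sq_real]
    rw [h1, h2]; ring
  have e1 : (mj * a / |mi - mj|) ^ 2 = mj ^ 2 * a ^ 2 / (mi - mj) ^ 2 := by
    rw [div_pow, mul_pow, sq_abs]
  have e3 : mi / 2 * (mj * a / |mi - mj|) * (b / |mi - mj|)
      = mi * mj * a * b / (2 * (mi - mj) ^ 2) := by
    have h := sq_abs (mi - mj)
    have h' : |mi - mj| ≠ 0 := abs_ne_zero.mpr hd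
    field_simp
    linear_combination (-a * b) * h
  have e2 : (b / |mi - mj|) ^ 2 = b ^ 2 / (mi - mj) ^ 2 := by
    rw [div_pow, sq_abs]
  have hvv : ‖v‖ ^ 2 = (mj * ‖u‖ ^ 2 + (b ^ 2 - mi * mj * a ^ 2) / (mi - mj)) / mi := by
    field_simp
    linarith [key]
  rw [hO, e2, e3, e1, hvv]
  field_simp
  ring
end
end

section
/- Let γ ∈ [0,1] and m > 0. Then there exist constants c₁, c₂ > 0 such that for every v ∈ ℝ³: c₁ (1+|v|)^γ ≤ ∫_{ℝ³} |v − u|^γ exp(−m|u|²/2) du ≤ c₂ (1+|v|)^γ. -/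
open MeasureTheory Real Metric

noncomputable section

lemma gauss_int3 {b : ℝ} (hb : 0 < b) :
    Integrable (fun u : EuclideanSpace ℝ (Fin 3) => Real.exp (-b * ‖u‖ ^ 2)) := by
  have h := (GaussianFourier.integrable_cexp_neg_mul_sq_norm_add
    (V := EuclideanSpace ℝ (Fin 3)) (b := (b : ℂ)) (by simpa using hb) 0 0).norm
  refine h.congr (Filter.Eventually.of_forall fun u => ?_)
  simp [Complex.norm_exp, ← Complex.ofReal_pow]

lemma gauss_val3 {b : ℝ} (hb : 0 < b) :
    0 < ∫ u : EuclideanSpace ℝ (Fin 3), Real.exp (-b * ‖u‖ ^ 2) := by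
  rw [GaussianFourier.integral_rexp_neg_mul_sq_norm hb]
  positivity

/-- Two-sided bound for the collision frequency of a hard-potential
kernel with Gaussian weight: for `γ ∈ [0,1]` and `m > 0` there are `c₁, c₂ > 0` with
`c₁ (1+|v|)^γ ≤ ∫_{ℝ³} |v − u|^γ exp(−m|u|²/2) du ≤ c₂ (1+|v|)^γ` for all `v`. -/
theorem statement9 (γ m : ℝ) (hγ0 : 0 ≤ γ) (hγ1 : γ ≤ 1) (hm : 0 < m) :
    ∃ c₁ c₂ : ℝ, 0 < c₁ ∧ 0 < c₂ ∧ ∀ v : EuclideanSpace ℝ (Fin 3),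
      c₁ * (1 + ‖v‖) ^ γ ≤
        (∫ u : EuclideanSpace ℝ (Fin 3), ‖v - u‖ ^ γ * Real.exp (-m * ‖u‖ ^ 2 / 2)) ∧
      (∫ u : EuclideanSpace ℝ (Fin 3), ‖v - u‖ ^ γ * Real.exp (-m * ‖u‖ ^ 2 / 2)) ≤
        c₂ * (1 + ‖v‖) ^ γ := by
  have hM4 : (0:ℝ) < m / 4 := by linarith
  set B : ℝ := (volume (ball (0 : EuclideanSpace ℝ (Fin 3)) 1)).toReal with hBdef
  have hBpos : 0 < B :=
    ENNReal.toReal_pos (measure_ball_pos volume _ one_pos).ne' measure_ball_lt_top.ne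
  set C : ℝ := ∫ u : EuclideanSpace ℝ (Fin 3), Real.exp (-(m/4) * ‖u‖ ^ 2) with hCdef
  have hCpos : 0 < C := gauss_val3 hM4
  refine ⟨min (Real.exp (-(m/2)) * B / 3) (21 * Real.exp (-(8*m)) * B),
    Real.exp (1/m) * C, lt_min (by positivity) (by positivity), by positivity, fun v => ?_⟩
  -- continuity / measurability of the integrand
  have hEcont : Continuous fun u : EuclideanSpace ℝ (Fin 3) =>
      ‖v - u‖ ^ γ * Real.exp (-m * ‖u‖ ^ 2 / 2) := by
    apply Continuous.mul
    · exact (continuous_const.sub continuous_id).norm.rpow_const fun u => Or.inr hγ0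
    · exact Real.continuous_exp.comp ((continuous_const.mul (continuous_norm.pow 2)).div_const 2)
  -- pointwise domination
  have hdom : ∀ u : EuclideanSpace ℝ (Fin 3),
      ‖v - u‖ ^ γ * Real.exp (-m * ‖u‖ ^ 2 / 2) ≤
        (1 + ‖v‖) ^ γ * (Real.exp (1/m) * Real.exp (-(m/4) * ‖u‖ ^ 2)) := by
    intro u
    have h2 : ‖v - u‖ ≤ (1 + ‖v‖) * (1 + ‖u‖) := by
      have := norm_sub_le v u
      nlinarith [norm_nonneg v, norm_nonneg u]
    have h3 : ‖v - u‖ ^ γ ≤ (1 + ‖v‖) ^ γ * (1 + ‖u‖) := by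
      calc ‖v - u‖ ^ γ ≤ ((1 + ‖v‖) * (1 + ‖u‖)) ^ γ :=
            Real.rpow_le_rpow (norm_nonneg _) h2 hγ0
        _ = (1 + ‖v‖) ^ γ * (1 + ‖u‖) ^ γ :=
            Real.mul_rpow (by positivity) (by positivity)
        _ ≤ (1 + ‖v‖) ^ γ * (1 + ‖u‖) := by
            have h := Real.rpow_le_rpow_of_exponent_le
              (by linarith [norm_nonneg u] : (1:ℝ) ≤ 1 + ‖u‖) hγ1
            rw [Real.rpow_one] at h
            exact mul_le_mul_of_nonneg_left h (Real.rpow_nonneg (by positivity) _)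
    have h4 : (1 + ‖u‖) * Real.exp (-m * ‖u‖ ^ 2 / 2) ≤
        Real.exp (1/m) * Real.exp (-(m/4) * ‖u‖ ^ 2) := by
      have ht : ‖u‖ + -m * ‖u‖ ^ 2 / 2 ≤ 1/m + -(m/4) * ‖u‖ ^ 2 := by
        have h1 : m * (1/m) = 1 := mul_one_div_cancel hm.ne'
        have key : m * (‖u‖ + -m * ‖u‖ ^ 2 / 2) ≤ m * (1/m + -(m/4) * ‖u‖ ^ 2) := by
          nlinarith [sq_nonneg (m * ‖u‖ - 2)]
        exact le_of_mul_le_mul_left key hm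
      calc (1 + ‖u‖) * Real.exp (-m * ‖u‖ ^ 2 / 2)
          ≤ Real.exp ‖u‖ * Real.exp (-m * ‖u‖ ^ 2 / 2) := by
            have := Real.add_one_le_exp ‖u‖
            exact mul_le_mul_of_nonneg_right (by linarith) (Real.exp_pos _).le
        _ = Real.exp (‖u‖ + -m * ‖u‖ ^ 2 / 2) := (Real.exp_add _ _).symm
        _ ≤ Real.exp (1/m + -(m/4) * ‖u‖ ^ 2) := Real.exp_le_exp.mpr ht
        _ = Real.exp (1/m) * Real.exp (-(m/4) * ‖u‖ ^ 2) := Real.exp_add _ _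
    calc ‖v - u‖ ^ γ * Real.exp (-m * ‖u‖ ^ 2 / 2)
        ≤ ((1 + ‖v‖) ^ γ * (1 + ‖u‖)) * Real.exp (-m * ‖u‖ ^ 2 / 2) :=
          mul_le_mul_of_nonneg_right h3 (Real.exp_pos _).le
      _ = (1 + ‖v‖) ^ γ * ((1 + ‖u‖) * Real.exp (-m * ‖u‖ ^ 2 / 2)) := by ring
      _ ≤ (1 + ‖v‖) ^ γ * (Real.exp (1/m) * Real.exp (-(m/4) * ‖u‖ ^ 2)) :=
          mul_le_mul_of_nonneg_left h4 (Real.rpow_nonneg (by positivity) _)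
  have hgauss : Integrable (fun u : EuclideanSpace ℝ (Fin 3) =>
      (1 + ‖v‖) ^ γ * (Real.exp (1/m) * Real.exp (-(m/4) * ‖u‖ ^ 2))) :=
    (((gauss_int3 hM4).const_mul (Real.exp (1/m))).const_mul _)
  have hFint : Integrable (fun u : EuclideanSpace ℝ (Fin 3) =>
      ‖v - u‖ ^ γ * Real.exp (-m * ‖u‖ ^ 2 / 2)) := by
    refine hgauss.mono' hEcont.aestronglyMeasurable (Filter.Eventually.of_forall fun u => ?_)
    rw [Real.norm_eq_abs, abs_of_nonneg (by positivity)]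
    exact hdom u
  have hFnn : ∀ u : EuclideanSpace ℝ (Fin 3),
      0 ≤ ‖v - u‖ ^ γ * Real.exp (-m * ‖u‖ ^ 2 / 2) := fun u => by positivity
  constructor
  · -- lower bound
    rcases le_or_gt 2 ‖v‖ with hv | hv
    · -- large velocities: integrate over the unit ball around the origin
      set S := ball (0 : EuclideanSpace ℝ (Fin 3)) 1 with hSdef
      have hS : MeasurableSet S := measurableSet_ball
      have hSfin : volume S ≠ ⊤ := measure_ball_lt_top.ne
      have hlow : ∀ u ∈ S, 1/3 * Real.exp (-(m/2)) * (1 + ‖v‖) ^ γ ≤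
          ‖v - u‖ ^ γ * Real.exp (-m * ‖u‖ ^ 2 / 2) := by
        intro u hu
        have hu1 : ‖u‖ < 1 := by simpa [hSdef, mem_ball_zero_iff] using hu
        have h5 : (1 + ‖v‖)/3 ≤ ‖v - u‖ := by
          have := norm_sub_norm_le v u
          linarith
        have h6 : ((1 + ‖v‖)/3) ^ γ ≤ ‖v - u‖ ^ γ :=
          Real.rpow_le_rpow (by positivity) h5 hγ0
        have h8 : (3:ℝ) ^ γ ≤ 3 := by
          calc (3:ℝ) ^ γ ≤ (3:ℝ) ^ (1:ℝ) :=
              Real.rpow_le_rpow_of_exponent_le (by norm_num) hγ1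
            _ = 3 := Real.rpow_one 3
        have h7 : 1/3 * (1 + ‖v‖) ^ γ ≤ ((1 + ‖v‖)/3) ^ γ := by
          calc 1/3 * (1 + ‖v‖) ^ γ = (1 + ‖v‖) ^ γ / 3 := by ring
            _ ≤ (1 + ‖v‖) ^ γ / (3:ℝ) ^ γ :=
              div_le_div_of_nonneg_left (Real.rpow_nonneg (by positivity) _)
                (Real.rpow_pos_of_pos (by norm_num) _) h8
            _ = ((1 + ‖v‖)/3) ^ γ :=
              (Real.div_rpow (by positivity) (by norm_num : (0:ℝ) ≤ 3) γ).symm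
        have h9 : Real.exp (-(m/2)) ≤ Real.exp (-m * ‖u‖ ^ 2 / 2) := by
          apply Real.exp_le_exp.mpr
          have hsq : ‖u‖ ^ 2 ≤ 1 := by nlinarith [norm_nonneg u]
          nlinarith [mul_le_mul_of_nonneg_left hsq hm.le]
        calc 1/3 * Real.exp (-(m/2)) * (1 + ‖v‖) ^ γ
            = (1/3 * (1 + ‖v‖) ^ γ) * Real.exp (-(m/2)) := by ring
          _ ≤ ‖v - u‖ ^ γ * Real.exp (-m * ‖u‖ ^ 2 / 2) :=
              mul_le_mul (h7.trans h6) h9 (Real.exp_pos _).le (by positivity)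
      have hset := setIntegral_ge_of_const_le hS hSfin hlow hFint.integrableOn
      rw [smul_eq_mul, measureReal_def, mul_comm (volume S).toReal] at hset
      have h10 : (∫ u in S, ‖v - u‖ ^ γ * Real.exp (-m * ‖u‖ ^ 2 / 2)) ≤
          ∫ u, ‖v - u‖ ^ γ * Real.exp (-m * ‖u‖ ^ 2 / 2) :=
        setIntegral_le_integral hFint (Filter.Eventually.of_forall hFnn)
      refine le_trans ?_ (hset.trans h10)
      calc min (Real.exp (-(m/2)) * B / 3) (21 * Real.exp (-(8*m)) * B) * (1 + ‖v‖) ^ γ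
          ≤ (Real.exp (-(m/2)) * B / 3) * (1 + ‖v‖) ^ γ :=
            mul_le_mul_of_nonneg_right (min_le_left _ _) (Real.rpow_nonneg (by positivity) _)
        _ = 1/3 * Real.exp (-(m/2)) * (1 + ‖v‖) ^ γ * (volume S).toReal := by
            rw [← hBdef]; ring
    · -- small velocities: integrate over a large annular region
      set S := ball (0 : EuclideanSpace ℝ (Fin 3)) 4 \ ball v 1 with hSdef
      have hS : MeasurableSet S := measurableSet_ball.diff measurableSet_ball
      have hSfin : volume S ≠ ⊤ :=
        ((measure_mono Set.diff_subset).trans_lt measure_ball_lt_top).ne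
      have hlow : ∀ u ∈ S, Real.exp (-(8*m)) ≤
          ‖v - u‖ ^ γ * Real.exp (-m * ‖u‖ ^ 2 / 2) := by
        rintro u ⟨hu4, hu1⟩
        have hu4' : ‖u‖ < 4 := by simpa [mem_ball_zero_iff] using hu4
        have hu1' : (1:ℝ) ≤ ‖v - u‖ := by
          have h := not_lt.mp (fun h => hu1 (by simpa [mem_ball, dist_eq_norm] using h))
          calc (1:ℝ) ≤ dist u v := h
            _ = ‖v - u‖ := by rw [dist_eq_norm, norm_sub_rev]
        have e1 : (1:ℝ) ≤ ‖v - u‖ ^ γ := Real.one_le_rpow hu1' hγ0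
        have e2 : Real.exp (-(8*m)) ≤ Real.exp (-m * ‖u‖ ^ 2 / 2) := by
          apply Real.exp_le_exp.mpr
          have hsq : ‖u‖ ^ 2 ≤ 16 := by nlinarith [norm_nonneg u]
          nlinarith [mul_le_mul_of_nonneg_left hsq hm.le]
        calc Real.exp (-(8*m)) ≤ Real.exp (-m * ‖u‖ ^ 2 / 2) := e2
          _ ≤ ‖v - u‖ ^ γ * Real.exp (-m * ‖u‖ ^ 2 / 2) :=
            le_mul_of_one_le_left (Real.exp_pos _).le e1
      have hset := setIntegral_ge_of_const_le hS hSfin hlow hFint.integrableOn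
      rw [smul_eq_mul, measureReal_def, mul_comm (volume S).toReal] at hset
      have h10 : (∫ u in S, ‖v - u‖ ^ γ * Real.exp (-m * ‖u‖ ^ 2 / 2)) ≤
          ∫ u, ‖v - u‖ ^ γ * Real.exp (-m * ‖u‖ ^ 2 / 2) :=
        setIntegral_le_integral hFint (Filter.Eventually.of_forall hFnn)
      -- volume of S is at least 63 B
      have hv4 : (volume (ball (0 : EuclideanSpace ℝ (Fin 3)) 4)).toReal = 64 * B := by
        rw [Measure.addHaar_ball volume (0 : EuclideanSpace ℝ (Fin 3))
          (by norm_num : (0:ℝ) ≤ 4), ENNReal.toReal_mul, ENNReal.toReal_ofReal (by positivity),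
          hBdef]
        norm_num [finrank_euclideanSpace_fin]
      have hv1 : (volume (ball v 1)).toReal = B := by
        rw [Measure.addHaar_ball volume v zero_le_one]
        simp [hBdef]
      have key : 63 * B ≤ (volume S).toReal := by
        have hsub : ball (0 : EuclideanSpace ℝ (Fin 3)) 4 ⊆ S ∪ ball v 1 := fun x hx =>
          (em (x ∈ ball v 1)).elim Or.inr fun h => Or.inl ⟨hx, h⟩
        have h1 : volume (ball (0 : EuclideanSpace ℝ (Fin 3)) 4) ≤
            volume S + volume (ball v 1) :=
          (measure_mono hsub).trans (measure_union_le _ _)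
        have hne : volume S + volume (ball v 1) ≠ ⊤ := by
          simp [ENNReal.add_ne_top, hSfin, measure_ball_lt_top.ne]
        have h2 := (ENNReal.toReal_le_toReal measure_ball_lt_top.ne hne).mpr h1
        rw [ENNReal.toReal_add hSfin measure_ball_lt_top.ne, hv4, hv1] at h2
        linarith
      have hvγ : (1 + ‖v‖) ^ γ ≤ 3 := by
        calc (1 + ‖v‖) ^ γ ≤ (1 + ‖v‖) ^ (1:ℝ) :=
            Real.rpow_le_rpow_of_exponent_le (by linarith [norm_nonneg v]) hγ1
          _ = 1 + ‖v‖ := Real.rpow_one _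
          _ ≤ 3 := by linarith
      refine le_trans ?_ (hset.trans h10)
      calc min (Real.exp (-(m/2)) * B / 3) (21 * Real.exp (-(8*m)) * B) * (1 + ‖v‖) ^ γ
          ≤ (21 * Real.exp (-(8*m)) * B) * 3 :=
            mul_le_mul (min_le_right _ _) hvγ (Real.rpow_nonneg (by positivity) _)
              (by positivity)
        _ = Real.exp (-(8*m)) * (63 * B) := by ring
        _ ≤ Real.exp (-(8*m)) * (volume S).toReal :=
            mul_le_mul_of_nonneg_left key (Real.exp_pos _).le
  · -- upper bound
    calc (∫ u, ‖v - u‖ ^ γ * Real.exp (-m * ‖u‖ ^ 2 / 2))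
        ≤ ∫ u : EuclideanSpace ℝ (Fin 3),
            (1 + ‖v‖) ^ γ * (Real.exp (1/m) * Real.exp (-(m/4) * ‖u‖ ^ 2)) :=
          integral_mono hFint hgauss hdom
      _ = (1 + ‖v‖) ^ γ * (Real.exp (1/m) * C) := by
          rw [integral_const_mul, integral_const_mul, ← hCdef]
      _ = Real.exp (1/m) * C * (1 + ‖v‖) ^ γ := by ring
end
end

section
/- There exists a constant C > 0 such that for every v ∈ ℝ³: ∫_{ℝ³} |η − v|^{−2} (1 + |η|)^{−4} dη ≤ C (1 + |v|)^{−2}. -/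
open MeasureTheory Real Metric
open scoped ENNReal NNReal

noncomputable section

namespace Statement10Aux

/-- monotonicity helper -/
lemma rpow_neg_anti {s x z : ℝ} (hs : 0 < s) (h : s ≤ x) (hz : z ≤ 0) :
    x ^ z ≤ s ^ z :=
  Real.rpow_le_rpow_of_nonpos hs h hz

lemma half_rpow_neg_two {x : ℝ} (hx : 0 < x) :
    (x / 2) ^ (-(2 : ℝ)) = 4 * x ^ (-(2 : ℝ)) := by
  rw [Real.div_rpow hx.le (by norm_num)]
  have h2 : (2 : ℝ) ^ (-(2 : ℝ)) = 4⁻¹ := by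
    rw [show (-(2 : ℝ)) = ((-2 : ℤ) : ℝ) by norm_num, Real.rpow_intCast]
    norm_num
  rw [h2]
  field_simp

lemma rpow_neg_four_eq {x : ℝ} (hx : 0 < x) :
    x ^ (-(4 : ℝ)) = x ^ (-(2 : ℝ)) * x ^ (-(2 : ℝ)) := by
  rw [show (-(4 : ℝ)) = (-(2 : ℝ)) + (-(2 : ℝ)) by norm_num, Real.rpow_add hx]

/-- algebra case lemmas -/
lemma alg_caseA (X Y W A2 F : ℝ) (hX : 0 ≤ X) (hY : 0 ≤ Y) (hW : 0 ≤ W)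
    (hF : 0 ≤ F) (hA2 : 0 ≤ A2) (h : A2 ≤ 4 * W) :
    A2 * (Y * Y) ≤ 4 * W * (3 * (Y * Y) + 2 * (X * X) + F) := by
  nlinarith [mul_le_mul_of_nonneg_right h (mul_nonneg hY hY),
    mul_nonneg hW (mul_nonneg hX hX), mul_nonneg hW hF,
    mul_nonneg hW (mul_nonneg hY hY)]

lemma alg_caseB1 (X Y W A2 : ℝ) (hX : 0 ≤ X) (hY : 0 ≤ Y) (hW : 0 ≤ W)
    (hA2 : 0 ≤ A2) (hY4W : Y ≤ 4 * W) (hY1 : Y ≤ 1) :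
    A2 * (Y * Y) ≤ 4 * W * (3 * (Y * Y) + 2 * (X * X) + A2) := by
  have hYY : Y * Y ≤ 4 * W := by nlinarith
  nlinarith [mul_le_mul_of_nonneg_left hYY hA2,
    mul_nonneg hW (mul_nonneg hY hY), mul_nonneg hW (mul_nonneg hX hX)]

lemma alg_caseB2 (X Y W A2 : ℝ) (hX : 0 ≤ X) (hY : 0 ≤ Y) (hW : 0 ≤ W)
    (hA2 : 0 ≤ A2) (hY4W : Y ≤ 4 * W) (hA2X : A2 ≤ 4 * X) :
    A2 * (Y * Y) ≤ 4 * W * (3 * (Y * Y) + 2 * (X * X) + 0) := by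
  have h1 : A2 * (Y * Y) ≤ 4 * X * (Y * Y) :=
    mul_le_mul_of_nonneg_right hA2X (mul_nonneg hY hY)
  have hXY : X * Y ≤ (X * X + Y * Y) / 2 := by nlinarith [sq_nonneg (X - Y)]
  have h2 : 4 * X * (Y * Y) ≤ 2 * (X * X + Y * Y) * Y := by
    nlinarith [mul_le_mul_of_nonneg_right hXY (by positivity : (0:ℝ) ≤ 4 * Y)]
  have h3 : 2 * (X * X + Y * Y) * Y ≤ 2 * (X * X + Y * Y) * (4 * W) := by
    have hnn : 0 ≤ 2 * (X * X + Y * Y) := by nlinarith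
    exact mul_le_mul_of_nonneg_left hY4W hnn
  have h4 : 0 ≤ W * (Y * Y) := mul_nonneg hW (mul_nonneg hY hY)
  nlinarith

/-- The key pointwise inequality. -/
lemma key (a b w : ℝ) (ha : 0 ≤ a) (hb : 0 ≤ b) (hw : 0 ≤ w) (htri : w ≤ a + b) :
    a ^ (-(2 : ℝ)) * (1 + b) ^ (-(4 : ℝ)) ≤
      4 * (1 + w) ^ (-(2 : ℝ)) *
        (3 * (1 + b) ^ (-(4 : ℝ)) + 2 * (1 + a) ^ (-(4 : ℝ)) +
          (if a ≤ 1 then a ^ (-(2 : ℝ)) else 0)) := by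
  have hbpos : (0 : ℝ) < 1 + b := by linarith
  have hapos : (0 : ℝ) < 1 + a := by linarith
  have hwpos : (0 : ℝ) < 1 + w := by linarith
  have hXnn : 0 ≤ (1 + a) ^ (-(2 : ℝ)) := Real.rpow_nonneg hapos.le _
  have hYnn : 0 ≤ (1 + b) ^ (-(2 : ℝ)) := Real.rpow_nonneg hbpos.le _
  have hWnn : 0 ≤ (1 + w) ^ (-(2 : ℝ)) := Real.rpow_nonneg hwpos.le _
  have hA2nn : 0 ≤ a ^ (-(2 : ℝ)) := Real.rpow_nonneg ha _
  rw [rpow_neg_four_eq hbpos, rpow_neg_four_eq hapos]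
  rcases le_or_gt ((1 + w) / 2) a with hcase | hcase
  · have hA2le : a ^ (-(2 : ℝ)) ≤ 4 * (1 + w) ^ (-(2 : ℝ)) := by
      have := rpow_neg_anti (by linarith : (0:ℝ) < (1 + w)/2) hcase
        (by norm_num : (-(2:ℝ)) ≤ 0)
      rwa [half_rpow_neg_two hwpos] at this
    have hFnn : 0 ≤ (if a ≤ 1 then a ^ (-(2 : ℝ)) else 0) := by
      split_ifs
      · exact hA2nn
      · exact le_rfl
    exact alg_caseA _ _ _ _ _ hXnn hYnn hWnn hFnn hA2nn hA2le
  · have hblarge : (1 + w) / 2 ≤ 1 + b := by linarith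
    have hYle : (1 + b) ^ (-(2 : ℝ)) ≤ 4 * (1 + w) ^ (-(2 : ℝ)) := by
      have := rpow_neg_anti (by linarith : (0:ℝ) < (1 + w)/2) hblarge
        (by norm_num : (-(2:ℝ)) ≤ 0)
      rwa [half_rpow_neg_two hwpos] at this
    rcases le_or_gt a 1 with hsmall | hbig
    · rw [if_pos hsmall]
      have hY1 : (1 + b) ^ (-(2 : ℝ)) ≤ 1 :=
        Real.rpow_le_one_of_one_le_of_nonpos (by linarith) (by norm_num)
      exact alg_caseB1 _ _ _ _ hXnn hYnn hWnn hA2nn hYle hY1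
    · rw [if_neg (not_le.mpr hbig)]
      have hA2le : a ^ (-(2 : ℝ)) ≤ 4 * (1 + a) ^ (-(2 : ℝ)) := by
        have h1 : (1 + a) / 2 ≤ a := by linarith
        have := rpow_neg_anti (by linarith : (0:ℝ) < (1 + a)/2) h1
          (by norm_num : (-(2:ℝ)) ≤ 0)
        rwa [half_rpow_neg_two hapos] at this
      exact alg_caseB2 _ _ _ _ hXnn hYnn hWnn hA2nn hYle hA2le

/-- the singular fragment -/
def Fs (x : EuclideanSpace ℝ (Fin 3)) : ℝ := if ‖x‖ ≤ 1 then ‖x‖ ^ (-(2 : ℝ)) else 0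

lemma Fs_nonneg (x : EuclideanSpace ℝ (Fin 3)) : 0 ≤ Fs x := by
  unfold Fs; split_ifs
  · exact Real.rpow_nonneg (norm_nonneg _) _
  · exact le_rfl

lemma integrable_Fs : Integrable Fs := by
  have hmeas : Measurable Fs := by
    apply Measurable.ite (measurableSet_le measurable_norm measurable_const) _ measurable_const
    fun_prop
  refine ⟨hmeas.aestronglyMeasurable, ?_⟩
  rw [hasFiniteIntegral_iff_ofReal (ae_of_all _ Fs_nonneg)]
  have hind : (fun x : EuclideanSpace ℝ (Fin 3) => ENNReal.ofReal (Fs x)) =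
      (closedBall (0 : EuclideanSpace ℝ (Fin 3)) 1).indicator
        (fun x => ENNReal.ofReal (‖x‖ ^ (-(2 : ℝ)))) := by
    ext x
    by_cases h : ‖x‖ ≤ 1 <;>
      simp [Fs, Set.indicator, Metric.mem_closedBall, dist_zero_right, h]
  rw [hind, lintegral_indicator measurableSet_closedBall]
  set g : EuclideanSpace ℝ (Fin 3) → ℝ≥0∞ := fun x => ENNReal.ofReal (‖x‖ ^ (-(2 : ℝ)))
    with hg
  set A : ℕ → Set (EuclideanSpace ℝ (Fin 3)) := fun n =>
    closedBall 0 ((2 : ℝ)⁻¹ ^ n) \ closedBall 0 ((2 : ℝ)⁻¹ ^ (n + 1)) with hA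
  have hcover : closedBall (0 : EuclideanSpace ℝ (Fin 3)) 1 ⊆ {0} ∪ ⋃ n, A n := by
    intro x hx
    rcases eq_or_ne x 0 with rfl | hx0
    · exact Or.inl rfl
    · right
      have hxpos : 0 < ‖x‖ := norm_pos_iff.mpr hx0
      have hxle : ‖x‖ ≤ 1 := by simpa [dist_zero_right] using hx
      have hex : ∃ n : ℕ, (2 : ℝ)⁻¹ ^ (n + 1) < ‖x‖ := by
        obtain ⟨n, hn⟩ := exists_pow_lt_of_lt_one hxpos (by norm_num : (2 : ℝ)⁻¹ < 1)
        exact ⟨n, lt_of_le_of_lt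
          (pow_le_pow_of_le_one (by norm_num) (by norm_num) (Nat.le_succ n)) hn⟩
      classical
      refine Set.mem_iUnion.mpr ⟨Nat.find hex, ?_, ?_⟩
      · rw [Metric.mem_closedBall, dist_zero_right]
        rcases Nat.eq_zero_or_pos (Nat.find hex) with h0 | hpos
        · rw [h0]; simpa using hxle
        · obtain ⟨m, hm⟩ := Nat.exists_eq_add_of_lt hpos
          have := Nat.find_min hex (m := m) (by omega)
          push_neg at this
          calc ‖x‖ ≤ (2:ℝ)⁻¹ ^ (m + 1) := this
            _ = (2:ℝ)⁻¹ ^ Nat.find hex := by rw [hm]; ring_nf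
      · rw [Metric.mem_closedBall, dist_zero_right, not_le]
        exact Nat.find_spec hex
  have hterm : ∀ n : ℕ, (∫⁻ x in A n, g x) ≤
      ENNReal.ofReal (4 * (2 : ℝ)⁻¹ ^ n) *
        volume (ball (0 : EuclideanSpace ℝ (Fin 3)) 1) := by
    intro n
    have hr : (0 : ℝ) < (2 : ℝ)⁻¹ ^ (n + 1) := by positivity
    have hbound : ∀ x ∈ A n, g x ≤ ENNReal.ofReal (((2 : ℝ)⁻¹ ^ (n + 1)) ^ (-(2 : ℝ))) := by
      intro x hx
      obtain ⟨-, hx2⟩ := hx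
      rw [Metric.mem_closedBall, dist_zero_right, not_le] at hx2
      exact ENNReal.ofReal_le_ofReal (rpow_neg_anti hr hx2.le (by norm_num))
    calc (∫⁻ x in A n, g x)
        ≤ ∫⁻ _ in A n, ENNReal.ofReal (((2 : ℝ)⁻¹ ^ (n + 1)) ^ (-(2 : ℝ))) :=
          setLIntegral_mono measurable_const hbound
      _ = ENNReal.ofReal (((2 : ℝ)⁻¹ ^ (n + 1)) ^ (-(2 : ℝ))) * volume (A n) :=
          setLIntegral_const _ _
      _ ≤ ENNReal.ofReal (((2 : ℝ)⁻¹ ^ (n + 1)) ^ (-(2 : ℝ))) *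
            volume (closedBall (0 : EuclideanSpace ℝ (Fin 3)) ((2 : ℝ)⁻¹ ^ n)) := by
          gcongr
          exact Set.diff_subset
      _ = ENNReal.ofReal (4 * (2 : ℝ)⁻¹ ^ n) *
            volume (ball (0 : EuclideanSpace ℝ (Fin 3)) 1) := by
          rw [Measure.addHaar_closedBall _ _ (by positivity : (0:ℝ) ≤ (2 : ℝ)⁻¹ ^ n)]
          rw [← mul_assoc, ← ENNReal.ofReal_mul (by positivity)]
          congr 2
          have h1 : ((2 : ℝ)⁻¹ ^ (n + 1)) ^ (-(2 : ℝ)) = 4 * 4 ^ n := by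
            rw [show (-(2 : ℝ)) = ((-2 : ℤ) : ℝ) by norm_num, Real.rpow_intCast]
            rw [zpow_neg, zpow_two, ← mul_pow, ← inv_pow]
            norm_num [pow_succ, mul_comm]
          rw [h1, finrank_euclideanSpace_fin]
          have h2 : ((2 : ℝ)⁻¹ ^ n) ^ 3 = (8 : ℝ)⁻¹ ^ n := by
            rw [← pow_mul, mul_comm, pow_mul]; norm_num
          rw [h2]
          have h3 : (4 : ℝ) ^ n * (8 : ℝ)⁻¹ ^ n = (2 : ℝ)⁻¹ ^ n := by
            rw [← mul_pow]; norm_num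
          nlinarith [h3]
  calc (∫⁻ x in closedBall (0 : EuclideanSpace ℝ (Fin 3)) 1, g x)
      ≤ ∫⁻ x in {0} ∪ ⋃ n, A n, g x := lintegral_mono_set hcover
    _ ≤ (∫⁻ x in ({0} : Set (EuclideanSpace ℝ (Fin 3))), g x) + ∫⁻ x in ⋃ n, A n, g x :=
        lintegral_union_le _ _ _
    _ ≤ 0 + ∑' n, ∫⁻ x in A n, g x := by
        gcongr
        · rw [lintegral_singleton]
          simp [hg, Real.zero_rpow (by norm_num : (-(2:ℝ)) ≠ 0)]
        · exact lintegral_iUnion_le _ _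
    _ ≤ 0 + ∑' n, ENNReal.ofReal (4 * (2 : ℝ)⁻¹ ^ n) *
          volume (ball (0 : EuclideanSpace ℝ (Fin 3)) 1) := by
        gcongr with n
        exact hterm n
    _ < ⊤ := by
        rw [zero_add, ENNReal.tsum_mul_right]
        refine ENNReal.mul_lt_top ?_ measure_ball_lt_top
        have hsum : Summable (fun n : ℕ => 4 * (2 : ℝ)⁻¹ ^ n) :=
          (summable_geometric_of_lt_one (by norm_num) (by norm_num)).mul_left 4
        rw [← ENNReal.ofReal_tsum_of_nonneg (fun n => by positivity) hsum]
        exact ENNReal.ofReal_lt_top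

end Statement10Aux

open Statement10Aux

/-- There exists `C > 0` such that for every `v ∈ ℝ³`,
`∫_{ℝ³} |η − v|^{−2} (1 + |η|)^{−4} dη ≤ C (1 + |v|)^{−2}`. -/
theorem statement10 :
    ∃ C : ℝ, 0 < C ∧ ∀ v : EuclideanSpace ℝ (Fin 3),
      (∫ η : EuclideanSpace ℝ (Fin 3),
          ‖η - v‖ ^ (-(2 : ℝ)) * (1 + ‖η‖) ^ (-(4 : ℝ)))
        ≤ C * (1 + ‖v‖) ^ (-(2 : ℝ)) := by
  classical
  set p1 : EuclideanSpace ℝ (Fin 3) → ℝ := fun x => (1 + ‖x‖) ^ (-(4 : ℝ)) with hp1def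
  have hp1 : Integrable p1 := by
    apply integrable_one_add_norm
    rw [finrank_euclideanSpace_fin]
    norm_num
  have hFs : Integrable Fs := integrable_Fs
  set C₁ := ∫ x : EuclideanSpace ℝ (Fin 3), p1 x with hC₁
  set A := ∫ x : EuclideanSpace ℝ (Fin 3), Fs x with hAdef
  refine ⟨max (4 * (5 * C₁ + A)) 1, lt_of_lt_of_le one_pos (le_max_right _ _), fun v => ?_⟩
  have hp1v : Integrable (fun η : EuclideanSpace ℝ (Fin 3) => p1 (η - v)) :=
    hp1.comp_sub_right v
  have hFsv : Integrable (fun η : EuclideanSpace ℝ (Fin 3) => Fs (η - v)) :=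
    hFs.comp_sub_right v
  have hsum1 : Integrable (fun η : EuclideanSpace ℝ (Fin 3) =>
      3 * p1 η + 2 * p1 (η - v) + Fs (η - v)) :=
    ((hp1.const_mul 3).add (hp1v.const_mul 2)).add hFsv
  have hM : Integrable (fun η : EuclideanSpace ℝ (Fin 3) =>
      4 * (1 + ‖v‖) ^ (-(2 : ℝ)) * (3 * p1 η + 2 * p1 (η - v) + Fs (η - v))) :=
    hsum1.const_mul _
  have hptwise : ∀ η : EuclideanSpace ℝ (Fin 3),
      ‖η - v‖ ^ (-(2 : ℝ)) * (1 + ‖η‖) ^ (-(4 : ℝ)) ≤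
        4 * (1 + ‖v‖) ^ (-(2 : ℝ)) * (3 * p1 η + 2 * p1 (η - v) + Fs (η - v)) := by
    intro η
    have htri : ‖v‖ ≤ ‖η - v‖ + ‖η‖ := by
      have : v = η - (η - v) := by abel
      calc ‖v‖ = ‖η - (η - v)‖ := by rw [← this]
        _ ≤ ‖η‖ + ‖η - v‖ := norm_sub_le _ _
        _ = ‖η - v‖ + ‖η‖ := by ring
    simpa [hp1def, Fs] using
      key ‖η - v‖ ‖η‖ ‖v‖ (norm_nonneg _) (norm_nonneg _) (norm_nonneg _) htri
  have hmono := integral_mono_of_nonneg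
    (f := fun η : EuclideanSpace ℝ (Fin 3) =>
      ‖η - v‖ ^ (-(2 : ℝ)) * (1 + ‖η‖) ^ (-(4 : ℝ)))
    (g := fun η : EuclideanSpace ℝ (Fin 3) =>
      4 * (1 + ‖v‖) ^ (-(2 : ℝ)) * (3 * p1 η + 2 * p1 (η - v) + Fs (η - v)))
    (ae_of_all _ fun η => by positivity) hM (ae_of_all _ hptwise)
  have hval : (∫ η : EuclideanSpace ℝ (Fin 3),
      4 * (1 + ‖v‖) ^ (-(2 : ℝ)) * (3 * p1 η + 2 * p1 (η - v) + Fs (η - v)))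
      = 4 * (1 + ‖v‖) ^ (-(2 : ℝ)) * (3 * C₁ + 2 * C₁ + A) := by
    have hI1 : Integrable (fun η : EuclideanSpace ℝ (Fin 3) =>
        3 * p1 η + 2 * p1 (η - v)) := (hp1.const_mul 3).add (hp1v.const_mul 2)
    rw [integral_const_mul]
    congr 1
    rw [integral_add hI1 hFsv, integral_add (hp1.const_mul 3) (hp1v.const_mul 2),
      integral_const_mul, integral_const_mul,
      integral_sub_right_eq_self p1 v, integral_sub_right_eq_self Fs v]
  have hrnn : (0 : ℝ) ≤ (1 + ‖v‖) ^ (-(2 : ℝ)) := Real.rpow_nonneg (by positivity) _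
  calc (∫ η : EuclideanSpace ℝ (Fin 3),
        ‖η - v‖ ^ (-(2 : ℝ)) * (1 + ‖η‖) ^ (-(4 : ℝ)))
      ≤ ∫ η : EuclideanSpace ℝ (Fin 3),
          4 * (1 + ‖v‖) ^ (-(2 : ℝ)) * (3 * p1 η + 2 * p1 (η - v) + Fs (η - v)) := hmono
    _ = 4 * (1 + ‖v‖) ^ (-(2 : ℝ)) * (3 * C₁ + 2 * C₁ + A) := hval
    _ = (4 * (5 * C₁ + A)) * (1 + ‖v‖) ^ (-(2 : ℝ)) := by ring
    _ ≤ max (4 * (5 * C₁ + A)) 1 * (1 + ‖v‖) ^ (-(2 : ℝ)) :=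
        mul_le_mul_of_nonneg_right (le_max_left _ _) hrnn
end
end

section
/- There exists a constant C > 0 such that for every measurable f : ℝ³ → ℝ and every v ∈ ℝ³: ∫_{ℝ³} |f(η)| / |η − v| dη ≤ C (1+|v|)^{−1} ( ∫_{ℝ³} (1+|η|)⁴ |f(η)|² dη )^{1/2}, where both sides are allowed to be +∞. -/
open MeasureTheory Real
open scoped ENNReal

noncomputable section

open Set Metric Filter

abbrev E3 := EuclideanSpace ℝ (Fin 3)


lemma ball_int (v : E3) (ρ : ℝ) (hρ : 0 < ρ) :
    ∫⁻ η : E3 in ball v ρ, ENNReal.ofReal ((‖η - v‖ ^ 2)⁻¹)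
      ≤ ENNReal.ofReal (3 * ρ) * volume (ball (0:E3) 1) := by
  set mB := volume (ball (0:E3) 1) with hmB
  have hmBtop : mB ≠ ∞ := measure_ball_lt_top.ne
  have hmeas : Measurable fun η : E3 => (‖η - v‖ ^ 2)⁻¹ := by fun_prop
  rw [lintegral_eq_lintegral_meas_le _ (Filter.Eventually.of_forall fun η => by positivity)
    hmeas.aemeasurable]
  set c : ℝ := (ρ ^ 2)⁻¹ with hc
  have hcpos : 0 < c := by positivity
  have hsplit : Ioi (0:ℝ) ⊆ Ioc 0 c ∪ Ioi c := by
    intro t ht; rcases le_or_gt t c with h | h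
    · exact Or.inl ⟨ht, h⟩
    · exact Or.inr h
  calc ∫⁻ t in Ioi (0:ℝ), (volume.restrict (ball v ρ)) {a | t ≤ (‖a - v‖ ^ 2)⁻¹}
      ≤ ∫⁻ t in Ioc 0 c ∪ Ioi c, (volume.restrict (ball v ρ)) {a | t ≤ (‖a - v‖ ^ 2)⁻¹} :=
        lintegral_mono_set hsplit
    _ ≤ (∫⁻ t in Ioc 0 c, (volume.restrict (ball v ρ)) {a | t ≤ (‖a - v‖ ^ 2)⁻¹})
        + ∫⁻ t in Ioi c, (volume.restrict (ball v ρ)) {a | t ≤ (‖a - v‖ ^ 2)⁻¹} :=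
        lintegral_union_le _ _ _
    _ ≤ ENNReal.ofReal ρ * mB + ENNReal.ofReal (2 * ρ) * mB := by
        gcongr
        · -- part 1
          calc ∫⁻ t in Ioc 0 c, (volume.restrict (ball v ρ)) {a | t ≤ (‖a - v‖ ^ 2)⁻¹}
              ≤ ∫⁻ _ in Ioc (0:ℝ) c, (ENNReal.ofReal (ρ ^ 3) * mB) := by
                refine setLIntegral_mono' measurableSet_Ioc fun t _ => ?_
                calc (volume.restrict (ball v ρ)) {a | t ≤ (‖a - v‖ ^ 2)⁻¹}
                    ≤ (volume.restrict (ball v ρ)) univ := measure_mono (subset_univ _)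
                  _ = volume (ball v ρ) := by simp
                  _ = ENNReal.ofReal (ρ ^ 3) * mB := by
                      rw [Measure.addHaar_ball _ _ hρ.le, hmB]; simp [finrank_euclideanSpace_fin]
            _ = ENNReal.ofReal (ρ ^ 3) * mB * volume (Ioc (0:ℝ) c) := by
                rw [setLIntegral_const]
            _ = ENNReal.ofReal ρ * mB := by
                rw [Real.volume_Ioc, sub_zero, mul_right_comm, ← ENNReal.ofReal_mul (by positivity)]
                congr 2
                rw [hc]; field_simp
        · -- part 2
          calc ∫⁻ t in Ioi c, (volume.restrict (ball v ρ)) {a | t ≤ (‖a - v‖ ^ 2)⁻¹}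
              ≤ ∫⁻ t in Ioi c, ENNReal.ofReal (t ^ (-(3/2) : ℝ)) * mB := by
                refine setLIntegral_mono' measurableSet_Ioi fun t ht => ?_
                have htpos : 0 < t := hcpos.trans ht
                have hsub : {a : E3 | t ≤ (‖a - v‖ ^ 2)⁻¹} ⊆ closedBall v (Real.sqrt t⁻¹) := by
                  intro a ha
                  simp only [mem_setOf_eq] at ha
                  rw [mem_closedBall, dist_eq_norm]
                  rcases eq_or_ne (‖a - v‖) 0 with h0 | h0
                  · rw [h0]; positivity
                  · have hpos : 0 < ‖a - v‖ ^ 2 := by positivity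
                    have : ‖a - v‖ ^ 2 ≤ t⁻¹ := by
                      rw [← inv_inv (‖a - v‖ ^ 2)]
                      exact inv_anti₀ htpos ha
                    calc ‖a - v‖ = Real.sqrt (‖a - v‖ ^ 2) := (Real.sqrt_sq (norm_nonneg _)).symm
                      _ ≤ Real.sqrt t⁻¹ := Real.sqrt_le_sqrt this
                calc (volume.restrict (ball v ρ)) {a | t ≤ (‖a - v‖ ^ 2)⁻¹}
                    ≤ volume (closedBall v (Real.sqrt t⁻¹)) :=
                      le_trans (Measure.restrict_apply_le _ _) (measure_mono hsub)
                  _ = ENNReal.ofReal (Real.sqrt t⁻¹ ^ 3) * mB := by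
                      rw [Measure.addHaar_closedBall _ _ (Real.sqrt_nonneg _), hmB]
                      simp [finrank_euclideanSpace_fin]
                  _ = ENNReal.ofReal (t ^ (-(3/2) : ℝ)) * mB := by
                      congr 1
                      rw [Real.sqrt_eq_rpow, ← Real.rpow_natCast ((t⁻¹) ^ ((1:ℝ)/2)) 3,
                        ← Real.rpow_mul (by positivity), ← Real.rpow_neg_one t,
                        ← Real.rpow_mul htpos.le]
                      norm_num
            _ = (∫⁻ t in Ioi c, ENNReal.ofReal (t ^ (-(3/2) : ℝ))) * mB :=
                lintegral_mul_const' _ _ hmBtop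
            _ ≤ ENNReal.ofReal (2 * ρ) * mB := by
                gcongr
                rw [← ofReal_integral_eq_lintegral_ofReal
                  (integrableOn_Ioi_rpow_of_lt (by norm_num) hcpos)
                  ((ae_restrict_mem measurableSet_Ioi).mono fun t ht =>
                    Real.rpow_nonneg (hcpos.trans ht).le _)]
                rw [integral_Ioi_rpow_of_lt (by norm_num) hcpos]
                apply ENNReal.ofReal_le_ofReal
                rw [hc]
                have h1 : ((ρ ^ 2)⁻¹ : ℝ) ^ (-(3/2) + 1 : ℝ) = ρ := by
                  rw [← Real.rpow_neg_one (ρ^2), ← Real.rpow_mul (by positivity),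
                    ← Real.rpow_natCast ρ 2, ← Real.rpow_mul hρ.le]
                  norm_num
                rw [h1]
                norm_num
                linarith

    _ = ENNReal.ofReal (3 * ρ) * mB := by
        rw [← add_mul, ← ENNReal.ofReal_add hρ.le (by positivity)]
        congr 2
        ring


lemma jap_lt_top : (∫⁻ η : E3, ENNReal.ofReal (((1 + ‖η‖) ^ 4)⁻¹)) < ∞ := by
  have h := finite_integral_one_add_norm (E := E3) (μ := volume) (r := 4)
    (by simp [finrank_euclideanSpace_fin]; norm_num)
  have heq : (∫⁻ η : E3, ENNReal.ofReal (((1 + ‖η‖) ^ 4)⁻¹))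
      = ∫⁻ η : E3, ENNReal.ofReal ((1 + ‖η‖) ^ (-4 : ℝ)) := by
    refine lintegral_congr fun η => ?_
    congr 1
    rw [Real.rpow_neg (by positivity)]
    congr 1
    rw [show (4:ℝ) = ((4:ℕ):ℝ) by norm_num, Real.rpow_natCast]
  rw [heq]; exact h

lemma kernel_bound' (v : E3) :
    ∫⁻ η : E3, ENNReal.ofReal ((1 + ‖v‖) ^ 2 * ((1 + ‖η‖) ^ 4)⁻¹ * (‖η - v‖ ^ 2)⁻¹)
      ≤ ENNReal.ofReal 24 * volume (ball (0:E3) 1)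
        + 4 * ∫⁻ η : E3, ENNReal.ofReal (((1 + ‖η‖) ^ 4)⁻¹) := by
  set mB := volume (ball (0:E3) 1) with hmB
  set R := 1 + ‖v‖ with hR
  have hR1 : 1 ≤ R := by simp [hR, norm_nonneg]
  have hR0 : 0 < R := lt_of_lt_of_le one_pos hR1
  rw [← lintegral_add_compl (μ := volume)
    (f := fun η : E3 => ENNReal.ofReal (R ^ 2 * ((1 + ‖η‖) ^ 4)⁻¹ * (‖η - v‖ ^ 2)⁻¹))
    (measurableSet_ball (x := v) (ε := R / 2))]
  refine add_le_add ?_ ?_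
  · -- ball part
    calc ∫⁻ η in ball v (R/2), ENNReal.ofReal (R ^ 2 * ((1 + ‖η‖) ^ 4)⁻¹ * (‖η - v‖ ^ 2)⁻¹)
        ≤ ∫⁻ η in ball v (R/2),
            ENNReal.ofReal (16 / R ^ 2) * ENNReal.ofReal ((‖η - v‖ ^ 2)⁻¹) := by
          refine setLIntegral_mono' measurableSet_ball fun η hη => ?_
          rw [← ENNReal.ofReal_mul (by positivity)]
          apply ENNReal.ofReal_le_ofReal
          have h1 : R / 2 ≤ 1 + ‖η‖ := by
            have h2 : ‖η - v‖ < R / 2 := by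
              rw [mem_ball, dist_eq_norm] at hη; exact hη
            have h3 : ‖v‖ - ‖η‖ ≤ ‖η - v‖ := by
              have := norm_sub_norm_le (v) (η)
              rw [← norm_neg (v - η), neg_sub] at this
              linarith [norm_sub_norm_le v η]
            linarith
          have h4 : R ^ 2 * ((1 + ‖η‖) ^ 4)⁻¹ ≤ 16 / R ^ 2 := by
            have h5 : (R / 2) ^ 4 ≤ (1 + ‖η‖) ^ 4 := by
              apply pow_le_pow_left₀ (by positivity) h1
            have h6 : ((1 + ‖η‖) ^ 4)⁻¹ ≤ ((R / 2) ^ 4)⁻¹ := by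
              apply inv_anti₀ (by positivity) h5
            calc R ^ 2 * ((1 + ‖η‖) ^ 4)⁻¹ ≤ R ^ 2 * ((R / 2) ^ 4)⁻¹ := by
                  exact mul_le_mul_of_nonneg_left h6 (by positivity)
              _ = 16 / R ^ 2 := by field_simp; ring
          exact mul_le_mul_of_nonneg_right h4 (by positivity)
      _ = ENNReal.ofReal (16 / R ^ 2) * ∫⁻ η in ball v (R/2), ENNReal.ofReal ((‖η - v‖ ^ 2)⁻¹) :=
          lintegral_const_mul' _ _ ENNReal.ofReal_ne_top
      _ ≤ ENNReal.ofReal (16 / R ^ 2) * (ENNReal.ofReal (3 * (R / 2)) * mB) := by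
          gcongr
          exact ball_int v (R / 2) (by positivity)
      _ ≤ ENNReal.ofReal 24 * mB := by
          rw [← mul_assoc, ← ENNReal.ofReal_mul (by positivity)]
          gcongr
          rw [div_mul_eq_mul_div, div_le_iff₀ (by positivity)]
          nlinarith
  · -- complement part
    calc ∫⁻ η in (ball v (R/2))ᶜ, ENNReal.ofReal (R ^ 2 * ((1 + ‖η‖) ^ 4)⁻¹ * (‖η - v‖ ^ 2)⁻¹)
        ≤ ∫⁻ η in (ball v (R/2))ᶜ, 4 * ENNReal.ofReal (((1 + ‖η‖) ^ 4)⁻¹) := by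
          refine setLIntegral_mono' measurableSet_ball.compl fun η hη => ?_
          have h2 : R / 2 ≤ ‖η - v‖ := by
            rw [mem_compl_iff, mem_ball, dist_eq_norm, not_lt] at hη; exact hη
          have h7 : (4 : ℝ≥0∞) = ENNReal.ofReal (4 : ℝ) := by norm_num
          rw [h7, ← ENNReal.ofReal_mul (by norm_num)]
          apply ENNReal.ofReal_le_ofReal
          have h3 : (‖η - v‖ ^ 2)⁻¹ ≤ ((R / 2) ^ 2)⁻¹ := by
            apply inv_anti₀ (by positivity)
            apply pow_le_pow_left₀ (by positivity) h2
          calc R ^ 2 * ((1 + ‖η‖) ^ 4)⁻¹ * (‖η - v‖ ^ 2)⁻¹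
              ≤ R ^ 2 * ((1 + ‖η‖) ^ 4)⁻¹ * ((R / 2) ^ 2)⁻¹ := by
                exact mul_le_mul_of_nonneg_left h3 (by positivity)
            _ = 4 * ((1 + ‖η‖) ^ 4)⁻¹ := by field_simp; ring
      _ = 4 * ∫⁻ η in (ball v (R/2))ᶜ, ENNReal.ofReal (((1 + ‖η‖) ^ 4)⁻¹) :=
          lintegral_const_mul' _ _ (by norm_num)
      _ ≤ 4 * ∫⁻ η : E3, ENNReal.ofReal (((1 + ‖η‖) ^ 4)⁻¹) := by
          gcongr
          exact Measure.restrict_le_self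



lemma ofReal_sq (x : ℝ) (hx : 0 ≤ x) :
    (ENNReal.ofReal x) ^ (2:ℝ) = ENNReal.ofReal (x ^ 2) := by
  rw [ENNReal.ofReal_rpow_of_nonneg hx (by norm_num : (0:ℝ) ≤ 2)]
  congr 1
  rw [show ((2:ℝ)) = ((2:ℕ):ℝ) by norm_num, Real.rpow_natCast]

/-- There is `C > 0` such that for every measurable `f : ℝ³ → ℝ` and
every `v ∈ ℝ³`,
`∫_{ℝ³} |f(η)|/|η − v| dη ≤ C (1+|v|)^{−1} (∫_{ℝ³} (1+|η|)⁴ |f(η)|² dη)^{1/2}`,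
where both sides are allowed to be `+∞` (hence stated with `lintegral`s). -/
theorem statement11 :
    ∃ C : ℝ, 0 < C ∧ ∀ f : EuclideanSpace ℝ (Fin 3) → ℝ, Measurable f →
      ∀ v : EuclideanSpace ℝ (Fin 3),
      (∫⁻ η : EuclideanSpace ℝ (Fin 3), ENNReal.ofReal (|f η| / ‖η - v‖))
        ≤ ENNReal.ofReal (C * (1 + ‖v‖)⁻¹) *
            (∫⁻ η : EuclideanSpace ℝ (Fin 3),
              ENNReal.ofReal ((1 + ‖η‖) ^ 4 * |f η| ^ 2)) ^ ((1 : ℝ) / 2) := by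
  classical
  set mB := volume (ball (0:E3) 1) with hmB
  set A := ∫⁻ η : E3, ENNReal.ofReal (((1 + ‖η‖) ^ 4)⁻¹) with hA
  set K : ℝ≥0∞ := ENNReal.ofReal 24 * mB + 4 * A with hK
  have hKtop : K ≠ ∞ := by
    rw [hK]
    refine (ENNReal.add_lt_top.2 ⟨?_, ?_⟩).ne
    · exact ENNReal.mul_lt_top ENNReal.ofReal_lt_top measure_ball_lt_top
    · exact ENNReal.mul_lt_top (by norm_num) jap_lt_top
  set C : ℝ := K.toReal ^ ((1:ℝ)/2) + 1 with hC
  have hC0 : 0 < C := by positivity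
  have hKC : K ^ ((1:ℝ)/2) ≤ ENNReal.ofReal C := by
    conv_lhs => rw [← ENNReal.ofReal_toReal hKtop]
    rw [ENNReal.ofReal_rpow_of_nonneg ENNReal.toReal_nonneg (by norm_num : (0:ℝ) ≤ 1/2)]
    exact ENNReal.ofReal_le_ofReal (by rw [hC]; linarith)
  refine ⟨C, hC0, fun f hf v => ?_⟩
  set R : ℝ := 1 + ‖v‖ with hRdef
  have hR0 : (0:ℝ) < R := by positivity
  set F : E3 → ℝ≥0∞ := fun η => ENNReal.ofReal ((1 + ‖η‖) ^ 2 * |f η|) with hF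
  set G : E3 → ℝ≥0∞ := fun η => ENNReal.ofReal (R * ((1 + ‖η‖) ^ 2)⁻¹ * ‖η - v‖⁻¹) with hG
  have hFm : Measurable F := by
    apply ENNReal.measurable_ofReal.comp
    fun_prop
  have hGm : Measurable G := by
    apply ENNReal.measurable_ofReal.comp
    fun_prop
  have hpt : ∀ η : E3, ENNReal.ofReal (|f η| / ‖η - v‖)
      = ENNReal.ofReal R⁻¹ * (F η * G η) := by
    intro η
    rw [hF, hG, ← ENNReal.ofReal_mul (by positivity), ← ENNReal.ofReal_mul (by positivity)]
    congr 1
    have h1 : (1 + ‖η‖ : ℝ) ≠ 0 := by positivity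
    have h2 : R ≠ 0 := hR0.ne'
    have e1 : R⁻¹ * R = 1 := inv_mul_cancel₀ h2
    have e2 : ((1 + ‖η‖ : ℝ) ^ 2) * ((1 + ‖η‖ : ℝ) ^ 2)⁻¹ = 1 :=
      mul_inv_cancel₀ (pow_ne_zero _ h1)
    calc |f η| / ‖η - v‖ = |f η| * ‖η - v‖⁻¹ := div_eq_mul_inv _ _
      _ = (R⁻¹ * R) * (((1 + ‖η‖) ^ 2) * ((1 + ‖η‖) ^ 2)⁻¹) * (|f η| * ‖η - v‖⁻¹) := by
          rw [e1, e2]; ring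
      _ = R⁻¹ * ((1 + ‖η‖) ^ 2 * |f η| * (R * ((1 + ‖η‖) ^ 2)⁻¹ * ‖η - v‖⁻¹)) := by ring
  calc ∫⁻ η : E3, ENNReal.ofReal (|f η| / ‖η - v‖)
      = ∫⁻ η : E3, ENNReal.ofReal R⁻¹ * (F η * G η) := lintegral_congr hpt
    _ = ENNReal.ofReal R⁻¹ * ∫⁻ η : E3, (F * G) η :=
        lintegral_const_mul' _ _ ENNReal.ofReal_ne_top
    _ ≤ ENNReal.ofReal R⁻¹ *
        ((∫⁻ η : E3, F η ^ (2:ℝ)) ^ ((1:ℝ)/2) * (∫⁻ η : E3, G η ^ (2:ℝ)) ^ ((1:ℝ)/2)) := by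
        gcongr
        exact ENNReal.lintegral_mul_le_Lp_mul_Lq volume
          (Real.holderConjugate_iff.2 ⟨one_lt_two, by norm_num⟩)
          hFm.aemeasurable hGm.aemeasurable
    _ ≤ ENNReal.ofReal R⁻¹ *
        ((∫⁻ η : E3, ENNReal.ofReal ((1 + ‖η‖) ^ 4 * |f η| ^ 2)) ^ ((1:ℝ)/2)
          * ENNReal.ofReal C) := by
        gcongr ENNReal.ofReal R⁻¹ * (?_ * ?_)
        · apply le_of_eq
          congr 1
          refine lintegral_congr fun η => ?_
          rw [hF]
          rw [ofReal_sq _ (by positivity)]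
          congr 1
          ring
        · refine le_trans ?_ hKC
          have hGsq : ∀ η : E3, G η ^ (2:ℝ)
              = ENNReal.ofReal (R ^ 2 * ((1 + ‖η‖) ^ 4)⁻¹ * (‖η - v‖ ^ 2)⁻¹) := by
            intro η
            rw [hG]
            rw [ofReal_sq _ (by positivity)]
            congr 1
            rw [mul_pow, mul_pow, inv_pow, inv_pow, ← pow_mul]
          gcongr
          calc ∫⁻ η : E3, G η ^ (2:ℝ)
              = ∫⁻ η : E3, ENNReal.ofReal (R ^ 2 * ((1 + ‖η‖) ^ 4)⁻¹ * (‖η - v‖ ^ 2)⁻¹) :=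
                lintegral_congr hGsq
            _ ≤ K := kernel_bound' v
    _ = ENNReal.ofReal (C * R⁻¹) *
        (∫⁻ η : E3, ENNReal.ofReal ((1 + ‖η‖) ^ 4 * |f η| ^ 2)) ^ ((1:ℝ)/2) := by
        rw [ENNReal.ofReal_mul hC0.le]
        ring
end
end

section
/- Let γ ∈ [0,1] and m_i, m_j > 0. Then there exists a constant C > 0 such that for every v ∈ ℝ³: ∫_{ℝ³} |m_i v − m_j u|^{−5/4} · |v − u|^{−(5/4)(1−γ)} · (1 + |u|)^{−5/2} du ≤ C (1 + |v|)^{−(3/2 − (5/4)γ)}. -/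
open MeasureTheory Real

noncomputable section

open Metric Set

local notation "E3" => EuclideanSpace ℝ (Fin 3)

lemma finrank_E3 : (Module.finrank ℝ (EuclideanSpace ℝ (Fin 3)) : ℝ) = 3 := by simp

/-- Integrability of `‖x‖^(-a)` on the unit ball for `0 < a < 3`. -/
lemma aux_integrableOn_ball (a : ℝ) (ha0 : 0 < a) (ha3 : a < 3) :
    IntegrableOn (fun x : E3 => ‖x‖ ^ (-a)) (ball (0 : E3) 1) volume := by
  constructor
  · exact (by fun_prop : Measurable fun x : E3 => ‖x‖ ^ (-a)).aestronglyMeasurable.restrict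
  · have hnn : ∀ x : E3, 0 ≤ ‖x‖ ^ (-a) := fun x => rpow_nonneg (norm_nonneg x) _
    have hmeas : Measurable fun x : E3 => ‖x‖ ^ (-a) := by fun_prop
    rw [hasFiniteIntegral_iff_ofReal (Filter.Eventually.of_forall hnn)]
    rw [lintegral_eq_lintegral_meas_le _ (Filter.Eventually.of_forall hnn) hmeas.aemeasurable]
    -- bound the level-set measures
    set ν := volume.restrict (ball (0 : E3) 1)
    have hball : volume (ball (0 : E3) 1) < ⊤ := measure_ball_lt_top
    have hb1 : ∀ t : ℝ, ν {x : E3 | t ≤ ‖x‖ ^ (-a)} ≤ volume (ball (0 : E3) 1) := by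
      intro t
      calc ν {x : E3 | t ≤ ‖x‖ ^ (-a)} ≤ ν univ := measure_mono (subset_univ _)
        _ = volume (ball (0 : E3) 1) := by simp [ν]
    have hb2 : ∀ t : ℝ, 0 < t → ν {x : E3 | t ≤ ‖x‖ ^ (-a)} ≤
        ENNReal.ofReal (t ^ (-(3/a))) * volume (ball (0 : E3) 1) := by
      intro t ht
      have hsub : {x : E3 | t ≤ ‖x‖ ^ (-a)} ⊆ closedBall (0 : E3) (t ^ (-a⁻¹)) := by
        intro x hx
        simp only [mem_setOf_eq] at hx
        have hxpos : 0 < ‖x‖ ^ (-a) := lt_of_lt_of_le ht hx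
        have hx0 : 0 < ‖x‖ := by
          by_contra h
          have : ‖x‖ = 0 := le_antisymm (not_lt.mp h) (norm_nonneg x)
          rw [this, zero_rpow (by linarith : -a ≠ 0)] at hxpos
          exact lt_irrefl 0 hxpos
        rw [mem_closedBall_zero_iff]
        have := rpow_le_rpow_of_nonpos ht hx (neg_nonpos.mpr (inv_nonneg.mpr ha0.le))
        calc ‖x‖ = (‖x‖ ^ (-a)) ^ (-a⁻¹) := by
              rw [← rpow_mul (norm_nonneg x), show -a * -a⁻¹ = 1 by field_simp, rpow_one]
          _ ≤ t ^ (-a⁻¹) := this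
      calc ν {x : E3 | t ≤ ‖x‖ ^ (-a)} ≤ volume {x : E3 | t ≤ ‖x‖ ^ (-a)} :=
            Measure.restrict_le_self _
        _ ≤ volume (closedBall (0 : E3) (t ^ (-a⁻¹))) := measure_mono hsub
        _ = ENNReal.ofReal ((t ^ (-a⁻¹)) ^ Module.finrank ℝ E3) * volume (ball (0 : E3) 1) := by
            exact Measure.addHaar_closedBall volume 0 (rpow_nonneg ht.le _)
        _ = ENNReal.ofReal (t ^ (-(3/a))) * volume (ball (0 : E3) 1) := by
            congr 1
            rw [← rpow_natCast (t ^ (-a⁻¹)), ← rpow_mul ht.le]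
            norm_num
            congr 1
            field_simp
    calc ∫⁻ t in Ioi (0:ℝ), ν {x : E3 | t ≤ ‖x‖ ^ (-a)}
        ≤ ∫⁻ t in Ioc (0:ℝ) 1 ∪ Ioi 1, ν {x : E3 | t ≤ ‖x‖ ^ (-a)} :=
          lintegral_mono_set Ioi_subset_Ioc_union_Ioi
      _ ≤ (∫⁻ t in Ioc (0:ℝ) 1, ν {x : E3 | t ≤ ‖x‖ ^ (-a)})
          + ∫⁻ t in Ioi (1:ℝ), ν {x : E3 | t ≤ ‖x‖ ^ (-a)} := lintegral_union_le _ _ _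
      _ < ⊤ := by
          refine ENNReal.add_lt_top.2 ⟨?_, ?_⟩
          · calc (∫⁻ t in Ioc (0:ℝ) 1, ν {x : E3 | t ≤ ‖x‖ ^ (-a)})
                ≤ ∫⁻ _ in Ioc (0:ℝ) 1, volume (ball (0 : E3) 1) :=
                  lintegral_mono fun t => hb1 t
              _ = volume (ball (0 : E3) 1) * volume (Ioc (0:ℝ) 1) := by
                  rw [setLIntegral_const]
              _ < ⊤ := by
                  refine ENNReal.mul_lt_top hball ?_
                  simp [Real.volume_Ioc]
          · calc (∫⁻ t in Ioi (1:ℝ), ν {x : E3 | t ≤ ‖x‖ ^ (-a)})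
                ≤ ∫⁻ t in Ioi (1:ℝ), ENNReal.ofReal (t ^ (-(3/a))) * volume (ball (0 : E3) 1) := by
                  refine setLIntegral_mono' measurableSet_Ioi fun t ht => ?_
                  exact hb2 t (lt_trans zero_lt_one ht)
              _ = (∫⁻ t in Ioi (1:ℝ), ENNReal.ofReal (t ^ (-(3/a)))) * volume (ball (0 : E3) 1) := by
                  rw [lintegral_mul_const' _ _ hball.ne]
              _ < ⊤ := by
                  refine ENNReal.mul_lt_top ?_ hball
                  refine IntegrableOn.setLIntegral_lt_top ?_
                  refine integrableOn_Ioi_rpow_of_lt ?_ zero_lt_one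
                  rw [neg_lt_neg_iff, lt_div_iff₀ ha0, one_mul]
                  exact ha3
/-- `x^(-α) * y^(-β) ≤ x^(-(α+β)) + y^(-(α+β))` for nonneg bases and exponents. -/
lemma aux_maxtrick {x y α β : ℝ} (hx : 0 ≤ x) (hy : 0 ≤ y) (hα : 0 ≤ α) (hβ : 0 ≤ β) :
    x ^ (-α) * y ^ (-β) ≤ x ^ (-(α + β)) + y ^ (-(α + β)) := by
  have key : ∀ u v : ℝ, 0 ≤ u → 0 ≤ v → ∀ γ δ : ℝ, 0 ≤ γ → 0 ≤ δ → u ≤ v →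
      u ^ (-γ) * v ^ (-δ) ≤ u ^ (-(γ + δ)) + v ^ (-(γ + δ)) := by
    intro u v hu hv γ δ hγ hδ huv
    rcases eq_or_lt_of_le hu with rfl | hu0
    · -- u = 0
      rcases eq_or_lt_of_le hγ with rfl | hγ0
      · -- γ = 0
        simp only [neg_zero, rpow_zero, one_mul, zero_add]
        have h0 : (0:ℝ) ≤ (0:ℝ) ^ (-δ) := rpow_nonneg le_rfl _
        linarith
      · rw [zero_rpow (by linarith : -γ ≠ 0), zero_mul]
        positivity
    · -- 0 < u ≤ v
      have hv0 : 0 < v := lt_of_lt_of_le hu0 huv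
      have h1 : v ^ (-δ) ≤ u ^ (-δ) := rpow_le_rpow_of_nonpos hu0 huv (by linarith)
      calc u ^ (-γ) * v ^ (-δ) ≤ u ^ (-γ) * u ^ (-δ) := by
            exact mul_le_mul_of_nonneg_left h1 (rpow_nonneg hu0.le _)
        _ = u ^ (-(γ + δ)) := by rw [← rpow_add hu0]; ring_nf
        _ ≤ u ^ (-(γ + δ)) + v ^ (-(γ + δ)) := by
            have : 0 ≤ v ^ (-(γ + δ)) := rpow_nonneg hv0.le _
            linarith
  rcases le_total x y with h | h
  · exact key x y hx hy α β hα hβ h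
  · have := key y x hy hx β α hβ hα h
    calc x ^ (-α) * y ^ (-β) = y ^ (-β) * x ^ (-α) := by ring
      _ ≤ y ^ (-(β + α)) + x ^ (-(β + α)) := this
      _ = x ^ (-(α + β)) + y ^ (-(α + β)) := by rw [add_comm (β:ℝ) α]; ring
/-- Uniform bound for `∫ ‖u-p‖^(-a) (1+‖u‖)^(-b)` over all `p`. -/
lemma aux_uniform (a b : ℝ) (ha0 : 0 < a) (ha3 : a < 3) (hb0 : 0 ≤ b) (hab : 3 < a + b) :
    ∃ C : ℝ, ∀ p : E3,
      Integrable (fun u : E3 => ‖u - p‖ ^ (-a) * (1 + ‖u‖) ^ (-b)) volume ∧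
      (∫ u : E3, ‖u - p‖ ^ (-a) * (1 + ‖u‖) ^ (-b)) ≤ C := by
  set φ : E3 → ℝ := (ball (0:E3) 1).indicator (fun w => ‖w‖ ^ (-a)) with hφdef
  set ψ : E3 → ℝ := fun w => (1 + ‖w‖) ^ (-(a + b)) with hψdef
  have hφ : Integrable φ volume := by
    rw [hφdef, integrable_indicator_iff measurableSet_ball]
    exact aux_integrableOn_ball a ha0 ha3
  have hψ : Integrable ψ volume := by
    refine integrable_one_add_norm ?_
    rw [finrank_E3]; exact hab
  have hφnn : ∀ w, 0 ≤ φ w := fun w =>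
    Set.indicator_nonneg (fun w _ => rpow_nonneg (norm_nonneg w) _) w
  have hψnn : ∀ w, 0 ≤ ψ w := fun w => rpow_nonneg (by positivity) _
  refine ⟨(∫ w, φ w) + 2 ^ a * ((∫ w, ψ w) + ∫ w, ψ w), fun p => ?_⟩
  set f : E3 → ℝ := fun u => ‖u - p‖ ^ (-a) * (1 + ‖u‖) ^ (-b) with hfdef
  set g : E3 → ℝ := fun u => φ (u - p) + 2 ^ a * (ψ (u - p) + ψ u) with hgdef
  have hfnn : ∀ u, 0 ≤ f u := fun u =>
    mul_nonneg (rpow_nonneg (norm_nonneg _) _) (rpow_nonneg (by positivity) _)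
  have hg : Integrable g volume :=
    (hφ.comp_sub_right p).add (((hψ.comp_sub_right p).add hψ).const_mul _)
  have hpt : ∀ u, f u ≤ g u := by
    intro u
    rcases lt_or_ge ‖u - p‖ 1 with hlt | hge
    · have h1 : f u ≤ φ (u - p) := by
        have hmem : u - p ∈ ball (0:E3) 1 := by
          rw [mem_ball_zero_iff]; exact hlt
        rw [hφdef, Set.indicator_of_mem hmem]
        calc f u ≤ ‖u - p‖ ^ (-a) * 1 := by
              refine mul_le_mul_of_nonneg_left ?_ (rpow_nonneg (norm_nonneg _) _)
              exact rpow_le_one_of_one_le_of_nonpos (by linarith [norm_nonneg u]) (by linarith)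
          _ = ‖u - p‖ ^ (-a) := mul_one _
      have h2 : 0 ≤ 2 ^ a * (ψ (u - p) + ψ u) := by
        have := hψnn (u - p); have := hψnn u; positivity
      calc f u ≤ φ (u - p) := h1
        _ ≤ g u := by rw [hgdef]; simp only; linarith
    · have hX : (0:ℝ) < ‖u - p‖ := lt_of_lt_of_le zero_lt_one hge
      have hmem : u - p ∉ ball (0:E3) 1 := by
        rw [mem_ball_zero_iff]; exact not_lt.mpr hge
      have hφ0 : φ (u - p) = 0 := Set.indicator_of_notMem hmem _
      have step1 : ‖u - p‖ ^ (-a) ≤ 2 ^ a * (1 + ‖u - p‖) ^ (-a) := by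
        have hhalf : (1 + ‖u - p‖) / 2 ≤ ‖u - p‖ := by linarith
        have h0 : (0:ℝ) < (1 + ‖u - p‖) / 2 := by positivity
        calc ‖u - p‖ ^ (-a) ≤ ((1 + ‖u - p‖) / 2) ^ (-a) :=
              rpow_le_rpow_of_nonpos h0 hhalf (by linarith)
          _ = (1 + ‖u - p‖) ^ (-a) / 2 ^ (-a) := div_rpow (by positivity) (by norm_num) _
          _ = 2 ^ a * (1 + ‖u - p‖) ^ (-a) := by
              rw [rpow_neg (by norm_num : (0:ℝ) ≤ 2)]
              field_simp
      have step2 : (1 + ‖u - p‖) ^ (-a) * (1 + ‖u‖) ^ (-b) ≤ ψ (u - p) + ψ u :=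
        aux_maxtrick (by positivity) (by positivity) ha0.le hb0
      calc f u ≤ (2 ^ a * (1 + ‖u - p‖) ^ (-a)) * (1 + ‖u‖) ^ (-b) := by
            exact mul_le_mul_of_nonneg_right step1 (rpow_nonneg (by positivity) _)
        _ = 2 ^ a * ((1 + ‖u - p‖) ^ (-a) * (1 + ‖u‖) ^ (-b)) := by ring
        _ ≤ 2 ^ a * (ψ (u - p) + ψ u) := by
            refine mul_le_mul_of_nonneg_left step2 (by positivity)
        _ = g u := by rw [hgdef]; simp only; rw [hφ0]; ring
  have hfint : Integrable f volume := by
    refine hg.mono' ?_ (Filter.Eventually.of_forall fun u => ?_)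
    · exact (by fun_prop : Measurable f).aestronglyMeasurable
    · rw [Real.norm_of_nonneg (hfnn u)]; exact hpt u
  refine ⟨hfint, ?_⟩
  calc (∫ u, f u) ≤ ∫ u, g u :=
        integral_mono_of_nonneg (Filter.Eventually.of_forall hfnn) hg
          (Filter.Eventually.of_forall hpt)
    _ = (∫ u, φ (u - p)) + 2 ^ a * ((∫ u, ψ (u - p)) + ∫ u, ψ u) := by
        have h1 : Integrable (fun u : E3 => φ (u - p)) volume := hφ.comp_sub_right p
        have h2 : Integrable (fun u : E3 => ψ (u - p) + ψ u) volume :=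
          (hψ.comp_sub_right p).add hψ
        have h3 : Integrable (fun u : E3 => 2 ^ a * (ψ (u - p) + ψ u)) volume := h2.const_mul _
        rw [hgdef]
        rw [integral_add h1 h3, MeasureTheory.integral_const_mul,
          integral_add (hψ.comp_sub_right p) hψ]
    _ = (∫ w, φ w) + 2 ^ a * ((∫ w, ψ w) + ∫ w, ψ w) := by
        rw [integral_sub_right_eq_self φ p, integral_sub_right_eq_self ψ p]
/-- Decay estimate: `∫ ‖u-p‖^(-s) (1+‖u‖)^(-5/2) du ≤ C (1+‖p‖)^(-(s-1))`. -/
lemma aux_decay (s : ℝ) (hs1 : 5/4 ≤ s) (hs2 : s ≤ 5/2) :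
    ∃ C : ℝ, 0 ≤ C ∧ ∀ p : E3,
      Integrable (fun u : E3 => ‖u - p‖ ^ (-s) * (1 + ‖u‖) ^ (-(5/2 : ℝ))) volume ∧
      (∫ u : E3, ‖u - p‖ ^ (-s) * (1 + ‖u‖) ^ (-(5/2 : ℝ)))
        ≤ C * (1 + ‖p‖) ^ (-(s - 1)) := by
  obtain ⟨C0, hC0⟩ := aux_uniform s (5/2) (by linarith) (by linarith) (by norm_num) (by linarith)
  obtain ⟨C1, hC1⟩ := aux_uniform s (7/2 - s) (by linarith) (by linarith) (by linarith)
    (by linarith)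
  obtain ⟨C2, hC2⟩ := aux_uniform 1 (5/2) one_pos (by norm_num) (by norm_num) (by norm_num)
  refine ⟨max (2 ^ (s-1) * (C1 + C2)) 0, le_max_right _ _, fun p => ⟨(hC0 p).1, ?_⟩⟩
  set h : E3 → ℝ := fun u => ‖u - p‖ ^ (-s) * (1 + ‖u‖) ^ (-(5/2 : ℝ)) with hhdef
  set f1 : E3 → ℝ := fun u => ‖u - p‖ ^ (-s) * (1 + ‖u‖) ^ (-(7/2 - s)) with hf1def
  set f2 : E3 → ℝ := fun u => ‖u - p‖ ^ (-(1:ℝ)) * (1 + ‖u‖) ^ (-(5/2 : ℝ)) with hf2def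
  set t : ℝ := 1 + ‖p‖ with htdef
  have ht0 : 0 < t := by positivity
  have hts : 0 < t ^ (s - 1) := rpow_pos_of_pos ht0 _
  have hhnn : ∀ u, 0 ≤ h u := fun u =>
    mul_nonneg (rpow_nonneg (norm_nonneg _) _) (rpow_nonneg (by positivity) _)
  have hs10 : (0:ℝ) ≤ s - 1 := by linarith
  -- pointwise estimate
  have hpt : ∀ u : E3, t ^ (s - 1) * h u ≤ 2 ^ (s-1) * (f1 u + f2 u) := by
    intro u
    have htri : t ≤ (1 + ‖u‖) + ‖u - p‖ := by
      have : ‖p‖ ≤ ‖u‖ + ‖u - p‖ := by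
        calc ‖p‖ = ‖u - (u - p)‖ := by congr 1; abel
          _ ≤ ‖u‖ + ‖u - p‖ := norm_sub_le _ _
      simp only [htdef]; linarith
    have hmax : t ^ (s-1) ≤ 2 ^ (s-1) * ((1 + ‖u‖) ^ (s-1) + ‖u - p‖ ^ (s-1)) := by
      set M := max (1 + ‖u‖) ‖u - p‖ with hMdef
      have hM0 : 0 ≤ M := le_trans (by positivity) (le_max_left _ _)
      have h2M : t ≤ 2 * M := by
        have := le_max_left (1 + ‖u‖) ‖u - p‖
        have := le_max_right (1 + ‖u‖) ‖u - p‖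
        linarith
      calc t ^ (s-1) ≤ (2 * M) ^ (s-1) := rpow_le_rpow ht0.le h2M hs10
        _ = 2 ^ (s-1) * M ^ (s-1) := mul_rpow (by norm_num) hM0
        _ ≤ 2 ^ (s-1) * ((1 + ‖u‖) ^ (s-1) + ‖u - p‖ ^ (s-1)) := by
            refine mul_le_mul_of_nonneg_left ?_ (by positivity)
            rcases max_cases (1 + ‖u‖) ‖u - p‖ with ⟨hM, _⟩ | ⟨hM, _⟩ <;> rw [hMdef, hM]
            · have : (0:ℝ) ≤ ‖u - p‖ ^ (s-1) := rpow_nonneg (norm_nonneg _) _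
              linarith
            · have : (0:ℝ) ≤ (1 + ‖u‖) ^ (s-1) := rpow_nonneg (by positivity) _
              linarith
    have hcomb1 : (1 + ‖u‖) ^ (s-1) * h u = f1 u := by
      simp only [hhdef, hf1def]
      rw [show (1 + ‖u‖) ^ (s-1) * (‖u - p‖ ^ (-s) * (1 + ‖u‖) ^ (-(5/2:ℝ)))
          = ‖u - p‖ ^ (-s) * ((1 + ‖u‖) ^ (s-1) * (1 + ‖u‖) ^ (-(5/2:ℝ))) by ring,
        ← rpow_add (by positivity : (0:ℝ) < 1 + ‖u‖),
        show s - 1 + -(5/2:ℝ) = -(7/2 - s) from by ring]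
    have hcomb2 : ‖u - p‖ ^ (s-1) * h u = f2 u := by
      simp only [hhdef, hf2def]
      rw [show ‖u - p‖ ^ (s-1) * (‖u - p‖ ^ (-s) * (1 + ‖u‖) ^ (-(5/2:ℝ)))
          = (‖u - p‖ ^ (s-1) * ‖u - p‖ ^ (-s)) * (1 + ‖u‖) ^ (-(5/2:ℝ)) by ring,
        ← rpow_add' (norm_nonneg _) (by intro hc; linarith : (s-1) + -s ≠ 0),
        show s - 1 + -s = -(1:ℝ) from by ring]
    calc t ^ (s-1) * h u ≤ (2 ^ (s-1) * ((1 + ‖u‖) ^ (s-1) + ‖u - p‖ ^ (s-1))) * h u :=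
          mul_le_mul_of_nonneg_right hmax (hhnn u)
      _ = 2 ^ (s-1) * ((1 + ‖u‖) ^ (s-1) * h u + ‖u - p‖ ^ (s-1) * h u) := by ring
      _ = 2 ^ (s-1) * (f1 u + f2 u) := by rw [hcomb1, hcomb2]
  -- integrate
  have key : t ^ (s-1) * (∫ u, h u) ≤ 2 ^ (s-1) * (C1 + C2) := by
    have hRHSint : Integrable (fun u : E3 => 2 ^ (s-1) * (f1 u + f2 u)) volume :=
      ((hC1 p).1.add (hC2 p).1).const_mul _
    calc t ^ (s-1) * (∫ u, h u) = ∫ u, t ^ (s-1) * h u := (integral_const_mul _ _).symm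
      _ ≤ ∫ u, 2 ^ (s-1) * (f1 u + f2 u) := by
          refine integral_mono_of_nonneg (Filter.Eventually.of_forall fun u => ?_) hRHSint
            (Filter.Eventually.of_forall hpt)
          exact mul_nonneg hts.le (hhnn u)
      _ = 2 ^ (s-1) * ((∫ u, f1 u) + ∫ u, f2 u) := by
          rw [integral_const_mul, integral_add (hC1 p).1 (hC2 p).1]
      _ ≤ 2 ^ (s-1) * (C1 + C2) := by
          refine mul_le_mul_of_nonneg_left ?_ (by positivity)
          exact add_le_add (hC1 p).2 (hC2 p).2
  have hinv : (∫ u, h u) ≤ (2 ^ (s-1) * (C1 + C2)) * t ^ (-(s-1)) := by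
    rw [rpow_neg ht0.le, ← div_eq_mul_inv]
    rwa [← le_div_iff₀' hts] at key
  calc (∫ u, h u) ≤ (2 ^ (s-1) * (C1 + C2)) * t ^ (-(s-1)) := hinv
    _ ≤ max (2 ^ (s-1) * (C1 + C2)) 0 * t ^ (-(s-1)) :=
        mul_le_mul_of_nonneg_right (le_max_left _ _) (rpow_nonneg ht0.le _)


/-- Let `γ ∈ [0,1]` and `m_i, m_j > 0`. There exists `C > 0` such that
for every `v ∈ ℝ³`,
`∫_{ℝ³} |m_i v − m_j u|^{−5/4} |v − u|^{−(5/4)(1−γ)} (1 + |u|)^{−5/2} du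
  ≤ C (1 + |v|)^{−(3/2 − (5/4)γ)}`. -/
theorem statement12 (γ mi mj : ℝ) (hγ0 : 0 ≤ γ) (hγ1 : γ ≤ 1)
    (hmi : 0 < mi) (hmj : 0 < mj) :
    ∃ C : ℝ, 0 < C ∧ ∀ v : EuclideanSpace ℝ (Fin 3),
      (∫ u : EuclideanSpace ℝ (Fin 3),
          ‖mi • v - mj • u‖ ^ (-(5 : ℝ) / 4)
            * ‖v - u‖ ^ (-(5 / 4 : ℝ) * (1 - γ))
            * (1 + ‖u‖) ^ (-(5 : ℝ) / 2))
        ≤ C * (1 + ‖v‖) ^ (-((3 : ℝ) / 2 - 5 / 4 * γ)) := by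
  obtain ⟨s, hsdef⟩ : ∃ s : ℝ, s = 5/2 - 5/4*γ := ⟨_, rfl⟩
  obtain ⟨C, hCnn, hC⟩ := aux_decay s (by rw [hsdef]; linarith) (by rw [hsdef]; linarith)
  have hs1 : (5/4:ℝ) ≤ s := by rw [hsdef]; linarith
  set c : ℝ := mi / mj with hcdef
  have hc : 0 < c := div_pos hmi hmj
  set m : ℝ := min 1 c with hmdef
  have hm : 0 < m := lt_min one_pos hc
  set M : ℝ := m ^ (-(s-1)) with hMdef
  have hM : 0 < M := rpow_pos_of_pos hm _
  have hKnn : 0 ≤ mj ^ (-(5:ℝ)/4) * C * (M + 1) :=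
    mul_nonneg (mul_nonneg (rpow_nonneg hmj.le _) hCnn) (by positivity)
  refine ⟨mj ^ (-(5:ℝ)/4) * C * (M + 1) + 1, by linarith, fun v => ?_⟩
  set p1 : E3 := c • v with hp1def
  have hp1norm : ‖p1‖ = c * ‖v‖ := by
    rw [hp1def, norm_smul, Real.norm_of_nonneg hc.le]
  set g1 : E3 → ℝ := fun u => ‖u - p1‖ ^ (-s) * (1 + ‖u‖) ^ (-(5/2 : ℝ)) with hg1def
  set g2 : E3 → ℝ := fun u => ‖u - v‖ ^ (-s) * (1 + ‖u‖) ^ (-(5/2 : ℝ)) with hg2def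
  have hint1 : Integrable g1 volume := (hC p1).1
  have hint2 : Integrable g2 volume := (hC v).1
  set T : ℝ := (1 + ‖v‖) ^ (-(s-1)) with hTdef
  have hT : 0 < T := rpow_pos_of_pos (by positivity) _
  -- pointwise bound
  have hpt : ∀ u : E3,
      ‖mi • v - mj • u‖ ^ (-(5 : ℝ) / 4) * ‖v - u‖ ^ (-(5 / 4 : ℝ) * (1 - γ))
        * (1 + ‖u‖) ^ (-(5 : ℝ) / 2)
      ≤ mj ^ (-(5:ℝ)/4) * (g1 u + g2 u) := by
    intro u
    have hrw : ‖mi • v - mj • u‖ = mj * ‖u - p1‖ := by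
      have heq : mi • v - mj • u = mj • (p1 - u) := by
        rw [hp1def, smul_sub, smul_smul, show mj * c = mi by rw [hcdef]; field_simp]
      rw [heq, norm_smul, Real.norm_of_nonneg hmj.le, norm_sub_rev]
    have e1 : ‖mi • v - mj • u‖ ^ (-(5 : ℝ) / 4)
        = mj ^ (-(5:ℝ)/4) * ‖u - p1‖ ^ (-(5:ℝ)/4) := by
      rw [hrw, mul_rpow hmj.le (norm_nonneg _)]
    have e2 : ‖v - u‖ = ‖u - v‖ := norm_sub_rev _ _
    rw [e1, e2]
    have hmax := aux_maxtrick (norm_nonneg (u - p1)) (norm_nonneg (u - v))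
      (by norm_num : (0:ℝ) ≤ 5/4) (by nlinarith : (0:ℝ) ≤ 5/4*(1-γ))
    rw [show (5/4 + 5/4*(1-γ) : ℝ) = s from by rw [hsdef]; ring] at hmax
    have hZ : (0:ℝ) ≤ (1 + ‖u‖) ^ (-(5 : ℝ) / 2) := rpow_nonneg (by positivity) _
    calc mj ^ (-(5:ℝ)/4) * ‖u - p1‖ ^ (-(5:ℝ)/4) * ‖u - v‖ ^ (-(5 / 4 : ℝ) * (1 - γ))
          * (1 + ‖u‖) ^ (-(5 : ℝ) / 2)
        = mj ^ (-(5:ℝ)/4) * ((‖u - p1‖ ^ (-(5/4:ℝ)) * ‖u - v‖ ^ (-(5/4*(1-γ):ℝ)))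
            * (1 + ‖u‖) ^ (-(5 : ℝ) / 2)) := by
          rw [show (-(5:ℝ)/4) = (-(5/4:ℝ)) from by norm_num,
            show ((-(5 / 4 : ℝ)) * (1 - γ)) = (-(5/4*(1-γ):ℝ)) from by ring]
          ring
      _ ≤ mj ^ (-(5:ℝ)/4) * ((‖u - p1‖ ^ (-s) + ‖u - v‖ ^ (-s))
            * (1 + ‖u‖) ^ (-(5 : ℝ) / 2)) := by
          refine mul_le_mul_of_nonneg_left ?_ (rpow_nonneg hmj.le _)
          exact mul_le_mul_of_nonneg_right hmax hZ
      _ = mj ^ (-(5:ℝ)/4) * (g1 u + g2 u) := by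
          rw [hg1def, hg2def]
          simp only
          rw [show (-(5:ℝ)/2) = (-(5/2:ℝ)) from by norm_num]
          ring
  -- nonnegativity of the original integrand
  have hFnn : ∀ u : E3, 0 ≤ ‖mi • v - mj • u‖ ^ (-(5 : ℝ) / 4)
      * ‖v - u‖ ^ (-(5 / 4 : ℝ) * (1 - γ)) * (1 + ‖u‖) ^ (-(5 : ℝ) / 2) := by
    intro u
    have h1 : (0:ℝ) ≤ ‖mi • v - mj • u‖ ^ (-(5 : ℝ) / 4) := rpow_nonneg (norm_nonneg _) _
    have h2 : (0:ℝ) ≤ ‖v - u‖ ^ (-(5 / 4 : ℝ) * (1 - γ)) := rpow_nonneg (norm_nonneg _) _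
    have h3 : (0:ℝ) ≤ (1 + ‖u‖) ^ (-(5 : ℝ) / 2) := rpow_nonneg (by positivity) _
    positivity
  -- comparison of (1+‖p1‖) with (1+‖v‖)
  have hcmp : (1 + ‖p1‖) ^ (-(s-1)) ≤ M * T := by
    have hml : m ≤ 1 := min_le_left _ _
    have hmr : m * ‖v‖ ≤ c * ‖v‖ :=
      mul_le_mul_of_nonneg_right (min_le_right _ _) (norm_nonneg _)
    have hcm : m * (1 + ‖v‖) ≤ 1 + ‖p1‖ := by
      rw [hp1norm]; nlinarith
    calc (1 + ‖p1‖) ^ (-(s-1)) ≤ (m * (1 + ‖v‖)) ^ (-(s-1)) :=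
          rpow_le_rpow_of_nonpos (by positivity) hcm (neg_nonpos.mpr (by linarith [hs1] : (0:ℝ) ≤ s - 1))
      _ = M * T := by rw [mul_rpow hm.le (by positivity), hMdef, hTdef]
  -- main estimate
  have hmain : (∫ u : E3, ‖mi • v - mj • u‖ ^ (-(5 : ℝ) / 4)
      * ‖v - u‖ ^ (-(5 / 4 : ℝ) * (1 - γ)) * (1 + ‖u‖) ^ (-(5 : ℝ) / 2))
      ≤ (mj ^ (-(5:ℝ)/4) * C * (M + 1)) * T := by
    calc (∫ u : E3, ‖mi • v - mj • u‖ ^ (-(5 : ℝ) / 4)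
          * ‖v - u‖ ^ (-(5 / 4 : ℝ) * (1 - γ)) * (1 + ‖u‖) ^ (-(5 : ℝ) / 2))
        ≤ ∫ u : E3, mj ^ (-(5:ℝ)/4) * (g1 u + g2 u) :=
          integral_mono_of_nonneg (Filter.Eventually.of_forall hFnn)
            ((hint1.add hint2).const_mul _) (Filter.Eventually.of_forall hpt)
      _ = mj ^ (-(5:ℝ)/4) * ((∫ u, g1 u) + ∫ u, g2 u) := by
          rw [MeasureTheory.integral_const_mul, integral_add hint1 hint2]
      _ ≤ mj ^ (-(5:ℝ)/4) * (C * (M * T) + C * T) := by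
          refine mul_le_mul_of_nonneg_left ?_ (rpow_nonneg hmj.le _)
          have b1 : (∫ u, g1 u) ≤ C * (M * T) := by
            calc (∫ u, g1 u) ≤ C * (1 + ‖p1‖) ^ (-(s-1)) := (hC p1).2
              _ ≤ C * (M * T) := mul_le_mul_of_nonneg_left hcmp hCnn
          have b2 : (∫ u, g2 u) ≤ C * T := (hC v).2
          linarith
      _ = (mj ^ (-(5:ℝ)/4) * C * (M + 1)) * T := by ring
  have hexp : (1 + ‖v‖) ^ (-((3 : ℝ) / 2 - 5 / 4 * γ)) = T := by
    rw [hTdef]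
    congr 1
    rw [hsdef]; ring
  rw [hexp]
  calc (∫ u : E3, ‖mi • v - mj • u‖ ^ (-(5 : ℝ) / 4)
        * ‖v - u‖ ^ (-(5 / 4 : ℝ) * (1 - γ)) * (1 + ‖u‖) ^ (-(5 : ℝ) / 2))
      ≤ (mj ^ (-(5:ℝ)/4) * C * (M + 1)) * T := hmain
    _ ≤ (mj ^ (-(5:ℝ)/4) * C * (M + 1) + 1) * T := by nlinarith
end
end
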